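/- arXiv:1507.00990 — 8 statements merged into one kernel-verified Lean document; each statement's English description precedes it below -/
import Mathlib

section
/- (Johnson–Lindenstrauss Lemma) There exists a universal constant K > 0 such that for every ε ∈ (0,1), every n ∈ ℕ with n ≥ 2, every m ∈ ℕ, every set of points a_1, …, a_n ∈ ℝ^m, and every k ∈ ℕ with k ≥ K·ε^{-2}·ln n, there exists a linear map T : ℝ^m → ℝ^k such that for all 1 ≤ i, j ≤ n: (1−ε)·‖a_i − a_j‖ ≤ ‖T(a_i) − T(a_j)‖ ≤ (1+ε)·‖a_i − a_j‖. -/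
open MeasureTheory Real

noncomputable def oneDim (c x : ℝ) : ℝ :=
  Real.exp (c * x ^ 2) * ((Real.sqrt (2 * Real.pi))⁻¹ * Real.exp (-x ^ 2 / 2))

lemma oneDim_eq (c x : ℝ) :
    oneDim c x = (Real.sqrt (2 * Real.pi))⁻¹ * Real.exp (-(1/2 - c) * x ^ 2) := by
  rw [oneDim, mul_comm, mul_assoc, ← Real.exp_add]; ring_nf

lemma integrable_oneDim {c : ℝ} (hc : c < 1/2) : Integrable (oneDim c) := by
  simp only [funext (oneDim_eq c)]
  exact (integrable_exp_neg_mul_sq (by linarith)).const_mul _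

lemma integral_oneDim {c : ℝ} (hc : c < 1/2) :
    ∫ x, oneDim c x = (Real.sqrt (1 - 2 * c))⁻¹ := by
  have h2 : (0:ℝ) < 1 - 2*c := by linarith
  have hπ : (0:ℝ) < 2 * π := by positivity
  simp only [funext (oneDim_eq c)]
  rw [MeasureTheory.integral_const_mul, integral_gaussian,
    show π / (1/2 - c) = (2 * π) / (1 - 2*c) by field_simp,
    Real.sqrt_div hπ.le]
  rw [div_eq_mul_inv, ← mul_assoc, inv_mul_cancel₀ (by positivity), one_mul]

noncomputable def gphi (m : ℕ) (x : EuclideanSpace ℝ (Fin m)) : ℝ :=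
  ((Real.sqrt (2 * Real.pi))⁻¹) ^ m * Real.exp (-‖x‖ ^ 2 / 2)

lemma gphi_pos (m : ℕ) (x : EuclideanSpace ℝ (Fin m)) : 0 < gphi m x := by
  have : (0:ℝ) < Real.sqrt (2 * Real.pi) := Real.sqrt_pos.2 (by positivity)
  rw [gphi]; positivity

lemma pi_form (m : ℕ) (c : ℝ) (i₀ : Fin m) (v : Fin m → ℝ) :
    Real.exp (c * (v i₀) ^ 2) *
      (((Real.sqrt (2 * Real.pi))⁻¹) ^ m * Real.exp (-(∑ j, (v j) ^ 2) / 2))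
    = ∏ j, (if j = i₀ then oneDim c (v j) else oneDim 0 (v j)) := by
  have h : ∀ j : Fin m, (if j = i₀ then oneDim c (v j) else oneDim 0 (v j))
      = (if j = i₀ then Real.exp (c * (v j)^2) else 1) *
        ((Real.sqrt (2 * Real.pi))⁻¹ * Real.exp (-(v j) ^ 2 / 2)) := by
    intro j
    by_cases hj : j = i₀ <;> simp [hj, oneDim]
  simp only [h]
  rw [Finset.prod_mul_distrib, Finset.prod_ite_eq' Finset.univ i₀ (fun j => Real.exp (c * (v j)^2)),
    Finset.prod_mul_distrib, Finset.prod_const, ← Real.exp_sum]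
  simp only [Finset.mem_univ, if_true, Finset.card_univ, Fintype.card_fin]
  congr 2
  rw [neg_div, ← Finset.sum_div, Finset.sum_neg_distrib, neg_div]

lemma row_lemma (m : ℕ) (u : EuclideanSpace ℝ (Fin m)) (hu : ‖u‖ = 1) {c : ℝ} (hc : c < 1/2) :
    (∫ x : EuclideanSpace ℝ (Fin m),
        Real.exp (c * (inner ℝ u x : ℝ) ^ 2) * gphi m x) = (Real.sqrt (1 - 2*c))⁻¹ ∧
    Integrable (fun x : EuclideanSpace ℝ (Fin m) =>
        Real.exp (c * (inner ℝ u x : ℝ) ^ 2) * gphi m x) := by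
  have hm : Nonempty (Fin m) := by
    by_contra h
    rw [not_nonempty_iff] at h
    have : u = 0 := Subsingleton.elim _ _
    rw [this, norm_zero] at hu; norm_num at hu
  obtain ⟨i₀⟩ := hm
  have hON : Orthonormal ℝ (Set.restrict {i₀} (fun _ : Fin m => u)) := by
    constructor
    · intro i; exact hu
    · intro i j hij; exact absurd (Subsingleton.elim i j) hij
  obtain ⟨b, hb⟩ := hON.exists_orthonormalBasis_extension_of_card_eq
    (by simp [finrank_euclideanSpace])
  have hbi₀ : b i₀ = u := hb i₀ rfl
  -- the function in rotated coordinates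
  set h : EuclideanSpace ℝ (Fin m) → ℝ :=
    fun w => Real.exp (c * (w i₀) ^ 2) * gphi m w with hh
  have hf : ∀ x, Real.exp (c * (inner ℝ u x : ℝ) ^ 2) * gphi m x = h (b.repr x) := by
    intro x
    have h1 : (inner ℝ u x : ℝ) = b.repr x i₀ := by
      rw [← hbi₀, b.repr_apply_apply]
    have h2 : gphi m (b.repr x) = gphi m x := by
      rw [gphi, gphi, b.repr.norm_map]
    simp only [hh]
    rw [h1, h2]
  have hmp : MeasurePreserving (b.repr) volume volume := b.measurePreserving_repr
  have hemb : MeasurableEmbedding (⇑b.repr) :=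
    b.measurableEquiv.measurableEmbedding
  -- transfer to pi coordinates
  have hmp2 := (EuclideanSpace.volume_preserving_symm_measurableEquiv_toLp (Fin m)).symm
  have hpi : ∀ v : Fin m → ℝ, h ((MeasurableEquiv.toLp 2 (Fin m → ℝ)) v)
      = ∏ j, (if j = i₀ then oneDim c (v j) else oneDim 0 (v j)) := by
    intro v
    have hnorm : ‖(MeasurableEquiv.toLp 2 (Fin m → ℝ)) v‖ ^ 2 = ∑ j, (v j) ^ 2 := by
      rw [EuclideanSpace.norm_eq, Real.sq_sqrt (by positivity)]
      simp [sq_abs]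
    have hcoord : ((MeasurableEquiv.toLp 2 (Fin m → ℝ)) v) i₀ = v i₀ := rfl
    rw [hh]; simp only [hcoord, gphi, hnorm]
    exact pi_form m c i₀ v
  have hprodint : Integrable (fun v : Fin m → ℝ =>
      ∏ j, (if j = i₀ then oneDim c (v j) else oneDim 0 (v j))) := by
    apply Integrable.fintype_prod (f := fun j x => if j = i₀ then oneDim c x else oneDim 0 x)
    intro j
    by_cases hj : j = i₀ <;>
      simp [hj, integrable_oneDim hc, integrable_oneDim (show (0:ℝ) < 1/2 by norm_num)]
  constructor
  · calc ∫ x : EuclideanSpace ℝ (Fin m), Real.exp (c * (inner ℝ u x : ℝ) ^ 2) * gphi m x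
        = ∫ x : EuclideanSpace ℝ (Fin m), h (b.repr x) := by simp only [hf]
      _ = ∫ w : EuclideanSpace ℝ (Fin m), h w := hmp.integral_comp hemb h
      _ = ∫ v : Fin m → ℝ, h ((MeasurableEquiv.toLp 2 (Fin m → ℝ)) v) :=
          (hmp2.integral_comp' h).symm
      _ = ∫ v : Fin m → ℝ, ∏ j, (if j = i₀ then oneDim c (v j) else oneDim 0 (v j)) := by
          simp only [hpi]
      _ = ∏ j, ∫ x : ℝ, (if j = i₀ then oneDim c x else oneDim 0 x) :=
          MeasureTheory.integral_fintype_prod_eq_prod (ι := Fin m)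
            (fun j x => if j = i₀ then oneDim c x else oneDim 0 x)
      _ = (Real.sqrt (1 - 2*c))⁻¹ := by
          rw [Finset.prod_eq_single i₀]
          · simp [integral_oneDim hc]
          · intro j _ hj
            simp only [if_neg hj]
            rw [integral_oneDim (show (0:ℝ) < 1/2 by norm_num)]; norm_num
          · simp
  · have : Integrable (h ∘ ⇑b.repr) := by
      rw [hmp.integrable_comp_emb hemb]
      have : Integrable h := by
        rw [← hmp2.integrable_comp_emb (MeasurableEquiv.toLp 2 (Fin m → ℝ)).measurableEmbedding]
        exact hprodint.congr (Filter.Eventually.of_forall fun v => (hpi v).symm)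
      exact this
    exact this.congr (Filter.Eventually.of_forall fun x => (hf x).symm)

-- normalization of gphi (no unit vector needed, works for m = 0)
lemma pi_form0 (m : ℕ) (v : Fin m → ℝ) :
    ((Real.sqrt (2 * Real.pi))⁻¹) ^ m * Real.exp (-(∑ j, (v j) ^ 2) / 2)
    = ∏ j, oneDim 0 (v j) := by
  have h : ∀ j : Fin m, oneDim 0 (v j)
      = (Real.sqrt (2 * Real.pi))⁻¹ * Real.exp (-(v j) ^ 2 / 2) := by
    intro j; simp [oneDim]
  simp only [h]
  rw [Finset.prod_mul_distrib, Finset.prod_const, Finset.card_univ, Fintype.card_fin,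
    ← Real.exp_sum]
  congr 2
  rw [neg_div, ← Finset.sum_div, Finset.sum_neg_distrib, neg_div]

lemma gphi_lemma (m : ℕ) :
    (∫ x : EuclideanSpace ℝ (Fin m), gphi m x) = 1 ∧ Integrable (gphi m) := by
  have hmp2 := (EuclideanSpace.volume_preserving_symm_measurableEquiv_toLp (Fin m)).symm
  have hpi : ∀ v : Fin m → ℝ, gphi m ((MeasurableEquiv.toLp 2 (Fin m → ℝ)) v)
      = ∏ j, oneDim 0 (v j) := by
    intro v
    have hnorm : ‖(MeasurableEquiv.toLp 2 (Fin m → ℝ)) v‖ ^ 2 = ∑ j, (v j) ^ 2 := by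
      rw [EuclideanSpace.norm_eq, Real.sq_sqrt (by positivity)]
      simp [sq_abs]
    rw [gphi, hnorm]
    exact pi_form0 m v
  have hprodint : Integrable (fun v : Fin m → ℝ => ∏ j, oneDim 0 (v j)) :=
    Integrable.fintype_prod (f := fun _ x => oneDim 0 x)
      (fun _ => integrable_oneDim (by norm_num))
  constructor
  · calc ∫ x : EuclideanSpace ℝ (Fin m), gphi m x
        = ∫ v : Fin m → ℝ, gphi m ((MeasurableEquiv.toLp 2 (Fin m → ℝ)) v) :=
          (hmp2.integral_comp' (gphi m)).symm
      _ = ∫ v : Fin m → ℝ, ∏ j, oneDim 0 (v j) := by simp only [hpi]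
      _ = ∏ _j : Fin m, ∫ x : ℝ, oneDim 0 x :=
          MeasureTheory.integral_fintype_prod_eq_prod (ι := Fin m) (fun _ x => oneDim 0 x)
      _ = 1 := by
          rw [integral_oneDim (show (0:ℝ) < 1/2 by norm_num)]
          norm_num
  · rw [← hmp2.integrable_comp_emb
      (MeasurableEquiv.toLp 2 (Fin m → ℝ)).measurableEmbedding]
    exact hprodint.congr (Filter.Eventually.of_forall fun v => (hpi v).symm)

-- Ω-level integral
lemma omega_lemma (k m : ℕ) (u : EuclideanSpace ℝ (Fin m)) (hu : ‖u‖ = 1)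
    {c : ℝ} (hc : c < 1/2) :
    (∫ W : Fin k → EuclideanSpace ℝ (Fin m),
        Real.exp (c * ∑ i, (inner ℝ u (W i) : ℝ) ^ 2) * ∏ i, gphi m (W i))
      = ((Real.sqrt (1 - 2*c))⁻¹) ^ k ∧
    Integrable (fun W : Fin k → EuclideanSpace ℝ (Fin m) =>
        Real.exp (c * ∑ i, (inner ℝ u (W i) : ℝ) ^ 2) * ∏ i, gphi m (W i)) := by
  have key : ∀ W : Fin k → EuclideanSpace ℝ (Fin m),
      Real.exp (c * ∑ i, (inner ℝ u (W i) : ℝ) ^ 2) * ∏ i, gphi m (W i)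
      = ∏ i, (Real.exp (c * (inner ℝ u (W i) : ℝ) ^ 2) * gphi m (W i)) := by
    intro W
    rw [Finset.prod_mul_distrib, ← Real.exp_sum, Finset.mul_sum]
  simp only [key]
  constructor
  · rw [MeasureTheory.volume_pi, MeasureTheory.integral_fintype_prod_eq_pow (ι := Fin k)
      (f := fun x : EuclideanSpace ℝ (Fin m) => Real.exp (c * (inner ℝ u x : ℝ) ^ 2) * gphi m x)]
    rw [(row_lemma m u hu hc).1]
    simp
  · exact Integrable.fintype_prod
      (f := fun _ x => Real.exp (c * (inner ℝ u x : ℝ) ^ 2) * gphi m x)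
      (fun _ => (row_lemma m u hu hc).2)

lemma omega_phi (k m : ℕ) :
    (∫ W : Fin k → EuclideanSpace ℝ (Fin m), ∏ i, gphi m (W i)) = 1 ∧
    Integrable (fun W : Fin k → EuclideanSpace ℝ (Fin m) => ∏ i, gphi m (W i)) := by
  constructor
  · rw [MeasureTheory.volume_pi, MeasureTheory.integral_fintype_prod_eq_pow (ι := Fin k) (f := gphi m), (gphi_lemma m).1,
      one_pow]
  · exact Integrable.fintype_prod (f := fun _ => gphi m) (fun _ => (gphi_lemma m).2)

-- numeric base inequalities
lemma base1 {x : ℝ} (h0 : 0 ≤ x) (h : x ≤ 1/2) : Real.exp (-(x + x^2)) ≤ 1 - x := by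
  have ht : (0:ℝ) ≤ x + x^2 := by positivity
  have hq := Real.quadratic_le_exp_of_nonneg ht
  have h3 : 1 ≤ (1 - x) * Real.exp (x + x^2) := by
    have : 1 ≤ (1 - x) * (1 + (x + x^2) + (x + x^2)^2 / 2) := by nlinarith [sq_nonneg x, sq_nonneg (1 - 2*x)]
    refine this.trans ?_
    have h1x : (0:ℝ) ≤ 1 - x := by linarith
    exact mul_le_mul_of_nonneg_left hq h1x
  have hepos : (0:ℝ) < Real.exp (x + x^2) := Real.exp_pos _
  rw [Real.exp_neg]
  rw [inv_le_iff_one_le_mul₀ hepos]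
  linarith [h3]

lemma base2 {x : ℝ} (h0 : 0 ≤ x) (h : x ≤ 1/2) : Real.exp (x - x^2) ≤ 1 + x := by
  have h1 : (x^2 - x) + 1 ≤ Real.exp (x^2 - x) := Real.add_one_le_exp _
  have h2 : (0:ℝ) < (x^2 - x) + 1 := by nlinarith
  have h3 : 1 ≤ (1 + x) * Real.exp (x^2 - x) := by
    have : 1 ≤ (1 + x) * ((x^2 - x) + 1) := by nlinarith
    refine this.trans ?_
    exact mul_le_mul_of_nonneg_left h1 (by linarith)
  have : x - x^2 = -(x^2 - x) := by ring
  rw [this, Real.exp_neg, inv_le_iff_one_le_mul₀ (Real.exp_pos _)]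
  linarith [h3]

lemma sqrt_exp (t : ℝ) : Real.sqrt (Real.exp t) = Real.exp (t/2) := by
  rw [show Real.exp t = Real.exp (t/2) ^ 2 by rw [sq, ← Real.exp_add]; ring_nf]
  exact Real.sqrt_sq (Real.exp_pos _).le

lemma baseA {ε : ℝ} (hε : ε ∈ Set.Ioo (0:ℝ) 1) :
    Real.exp (-(ε/4 * (1+ε))) * (Real.sqrt (1 - 2*(ε/4)))⁻¹ ≤ Real.exp (-(ε^2/8)) := by
  obtain ⟨h0, h1⟩ := hε
  set x := ε/2 with hx
  have hb1 : Real.exp (-(x + x^2)) ≤ 1 - x := base1 (by positivity) (by rw [hx]; linarith)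
  have hsq : Real.exp (-(x + x^2)/2) ≤ Real.sqrt (1 - x) := by
    rw [← sqrt_exp]
    exact Real.sqrt_le_sqrt hb1
  have hpos : (0:ℝ) < Real.exp (-(x + x^2)/2) := Real.exp_pos _
  have hinv : (Real.sqrt (1 - x))⁻¹ ≤ Real.exp ((x + x^2)/2) := by
    have := inv_anti₀ hpos hsq
    rwa [← Real.exp_neg, show -(-(x + x^2)/2) = (x + x^2)/2 by ring] at this
  have : 1 - 2*(ε/4) = 1 - x := by rw [hx]; ring
  rw [this]
  calc Real.exp (-(ε/4 * (1+ε))) * (Real.sqrt (1 - x))⁻¹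
      ≤ Real.exp (-(ε/4 * (1+ε))) * Real.exp ((x + x^2)/2) :=
        mul_le_mul_of_nonneg_left hinv (Real.exp_pos _).le
    _ = Real.exp (-(ε/4 * (1+ε)) + (x + x^2)/2) := (Real.exp_add _ _).symm
    _ = Real.exp (-(ε^2/8)) := by rw [hx]; ring_nf

lemma baseB {ε : ℝ} (hε : ε ∈ Set.Ioo (0:ℝ) 1) :
    Real.exp (ε/4 * (1-ε)) * (Real.sqrt (1 + 2*(ε/4)))⁻¹ ≤ Real.exp (-(ε^2/8)) := by
  obtain ⟨h0, h1⟩ := hε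
  set x := ε/2 with hx
  have hb2 : Real.exp (x - x^2) ≤ 1 + x := base2 (by positivity) (by rw [hx]; linarith)
  have hsq : Real.exp ((x - x^2)/2) ≤ Real.sqrt (1 + x) := by
    rw [← sqrt_exp]
    exact Real.sqrt_le_sqrt hb2
  have hinv : (Real.sqrt (1 + x))⁻¹ ≤ Real.exp (-((x - x^2)/2)) := by
    have := inv_anti₀ (Real.exp_pos _) hsq
    rwa [← Real.exp_neg] at this
  have : 1 + 2*(ε/4) = 1 + x := by rw [hx]; ring
  rw [this]
  calc Real.exp (ε/4 * (1-ε)) * (Real.sqrt (1 + x))⁻¹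
      ≤ Real.exp (ε/4 * (1-ε)) * Real.exp (-((x - x^2)/2)) :=
        mul_le_mul_of_nonneg_left hinv (Real.exp_pos _).le
    _ = Real.exp (ε/4 * (1-ε) + -((x - x^2)/2)) := (Real.exp_add _ _).symm
    _ = Real.exp (-(ε^2/8)) := by rw [hx]; ring_nf

lemma exists_good (ε : ℝ) (hε : ε ∈ Set.Ioo (0:ℝ) 1) (k m : ℕ) {ι : Type*} [Fintype ι]
    (u : ι → EuclideanSpace ℝ (Fin m)) (hu : ∀ p, ‖u p‖ = 1)
    (hcard : (Fintype.card ι : ℝ) * (2 * Real.exp (-(ε^2/8) * k)) < 1) :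
    ∃ W : Fin k → EuclideanSpace ℝ (Fin m), ∀ p,
      (1-ε) * k ≤ ∑ i, (inner ℝ (u p) (W i) : ℝ)^2 ∧
      ∑ i, (inner ℝ (u p) (W i) : ℝ)^2 ≤ (1+ε) * k := by
  obtain ⟨hε0, hε1⟩ := hε
  set c : ℝ := ε/4 with hc_def
  have hc : c < 1/2 := by rw [hc_def]; linarith
  have hc' : -c < 1/2 := by rw [hc_def]; linarith
  have hcpos : 0 < c := by rw [hc_def]; linarith
  set Φ : (Fin k → EuclideanSpace ℝ (Fin m)) → ℝ := fun W => ∏ i, gphi m (W i) with hΦ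
  have hΦpos : ∀ W, 0 < Φ W := fun W => Finset.prod_pos fun i _ => gphi_pos m (W i)
  set S : ι → (Fin k → EuclideanSpace ℝ (Fin m)) → ℝ :=
    fun p W => ∑ i, (inner ℝ (u p) (W i) : ℝ)^2 with hS
  set F : (Fin k → EuclideanSpace ℝ (Fin m)) → ℝ := fun W =>
    ∑ p : ι, (Real.exp (-(c * (1+ε) * k)) * (Real.exp (c * S p W) * Φ W)
      + Real.exp (c * (1-ε) * k) * (Real.exp (-c * S p W) * Φ W)) with hF
  have hFint : Integrable F := by
    apply integrable_finset_sum
    intro p _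
    exact ((omega_lemma k m (u p) (hu p) hc).2.const_mul _).add
      ((omega_lemma k m (u p) (hu p) hc').2.const_mul _)
  have hΦint : Integrable Φ := (omega_phi k m).2
  have hintF : ∫ W, F W = ∑ p : ι,
      (Real.exp (-(c * (1+ε) * k)) * ((Real.sqrt (1 - 2*c))⁻¹)^k
        + Real.exp (c * (1-ε) * k) * ((Real.sqrt (1 + 2*c))⁻¹)^k) := by
    have hint : ∀ p ∈ Finset.univ, Integrable (fun W : Fin k → EuclideanSpace ℝ (Fin m) =>
        Real.exp (-(c * (1+ε) * k)) * (Real.exp (c * S p W) * Φ W)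
        + Real.exp (c * (1-ε) * k) * (Real.exp (-c * S p W) * Φ W)) := fun p _ => by
      exact ((omega_lemma k m (u p) (hu p) hc).2.const_mul _).add
        ((omega_lemma k m (u p) (hu p) hc').2.const_mul _)
    simp only [hF]
    rw [integral_finset_sum _ hint]
    congr 1 with p
    have ha : Integrable (fun W : Fin k → EuclideanSpace ℝ (Fin m) =>
        Real.exp (-(c * (1+ε) * k)) * (Real.exp (c * S p W) * Φ W)) :=
      (omega_lemma k m (u p) (hu p) hc).2.const_mul _
    have hb : Integrable (fun W : Fin k → EuclideanSpace ℝ (Fin m) =>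
        Real.exp (c * (1-ε) * k) * (Real.exp (-c * S p W) * Φ W)) :=
      (omega_lemma k m (u p) (hu p) hc').2.const_mul _
    rw [integral_add ha hb,
      MeasureTheory.integral_const_mul, MeasureTheory.integral_const_mul,
      (omega_lemma k m (u p) (hu p) hc).1, (omega_lemma k m (u p) (hu p) hc').1]
    norm_num
  -- bound each summand
  have hterm : Real.exp (-(c * (1+ε) * k)) * ((Real.sqrt (1 - 2*c))⁻¹)^k
        + Real.exp (c * (1-ε) * k) * ((Real.sqrt (1 + 2*c))⁻¹)^k
      ≤ 2 * Real.exp (-(ε^2/8) * k) := by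
    have e1 : Real.exp (-(c * (1+ε) * k)) * ((Real.sqrt (1 - 2*c))⁻¹)^k
        ≤ Real.exp (-(ε^2/8) * k) := by
      have hbase := baseA ⟨hε0, hε1⟩
      calc Real.exp (-(c * (1+ε) * k)) * ((Real.sqrt (1 - 2*c))⁻¹)^k
          = (Real.exp (-(c * (1+ε))) * (Real.sqrt (1 - 2*c))⁻¹)^k := by
            rw [mul_pow, ← Real.exp_nat_mul]
            congr 2
            ring
        _ ≤ (Real.exp (-(ε^2/8)))^k := by
            apply pow_le_pow_left₀ (by positivity) hbase
        _ = Real.exp (-(ε^2/8) * k) := by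
            rw [← Real.exp_nat_mul]; congr 1; ring
    have e2 : Real.exp (c * (1-ε) * k) * ((Real.sqrt (1 + 2*c))⁻¹)^k
        ≤ Real.exp (-(ε^2/8) * k) := by
      have hbase := baseB ⟨hε0, hε1⟩
      calc Real.exp (c * (1-ε) * k) * ((Real.sqrt (1 + 2*c))⁻¹)^k
          = (Real.exp (c * (1-ε)) * (Real.sqrt (1 + 2*c))⁻¹)^k := by
            rw [mul_pow, ← Real.exp_nat_mul]
            congr 2
            ring
        _ ≤ (Real.exp (-(ε^2/8)))^k := by
            apply pow_le_pow_left₀ (by positivity) hbase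
        _ = Real.exp (-(ε^2/8) * k) := by
            rw [← Real.exp_nat_mul]; congr 1; ring
    linarith
  have hFlt : ∫ W, F W < 1 := by
    rw [hintF]
    calc (∑ _p : ι, (Real.exp (-(c * (1+ε) * k)) * ((Real.sqrt (1 - 2*c))⁻¹)^k
        + Real.exp (c * (1-ε) * k) * ((Real.sqrt (1 + 2*c))⁻¹)^k))
        ≤ ∑ _p : ι, 2 * Real.exp (-(ε^2/8) * k) :=
          Finset.sum_le_sum fun p _ => hterm
      _ = (Fintype.card ι : ℝ) * (2 * Real.exp (-(ε^2/8) * k)) := by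
          rw [Finset.sum_const, Finset.card_univ, nsmul_eq_mul]
      _ < 1 := hcard
  -- contradiction argument
  by_contra hcon
  push_neg at hcon
  have hFge : ∀ W, Φ W ≤ F W := by
    intro W
    obtain ⟨p, hp⟩ := hcon W
    have hnonneg : ∀ q ∈ Finset.univ, (0:ℝ) ≤
        Real.exp (-(c * (1+ε) * k)) * (Real.exp (c * S q W) * Φ W)
        + Real.exp (c * (1-ε) * k) * (Real.exp (-c * S q W) * Φ W) := by
      intro q _
      have := (hΦpos W).le
      positivity
    have hkey : Φ W ≤ Real.exp (-(c * (1+ε) * k)) * (Real.exp (c * S p W) * Φ W)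
        + Real.exp (c * (1-ε) * k) * (Real.exp (-c * S p W) * Φ W) := by
      by_cases hlow : (1-ε) * k ≤ S p W
      · -- then the upper bound fails : (1+ε) k < S p W
        have hhigh : (1+ε) * k < S p W := hp hlow
        have h1 : (1:ℝ) ≤ Real.exp (-(c * (1+ε) * k)) * Real.exp (c * S p W) := by
          rw [← Real.exp_add]
          exact Real.one_le_exp (by nlinarith)
        have h2 : Φ W ≤ Real.exp (-(c * (1+ε) * k)) * (Real.exp (c * S p W) * Φ W) := by
          rw [← mul_assoc]
          nth_rewrite 1 [← one_mul (Φ W)]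
          exact mul_le_mul_of_nonneg_right h1 (hΦpos W).le
        have h3 : (0:ℝ) ≤ Real.exp (c * (1-ε) * k) * (Real.exp (-c * S p W) * Φ W) := by
          have := (hΦpos W).le; positivity
        linarith
      · push_neg at hlow
        have h1 : (1:ℝ) ≤ Real.exp (c * (1-ε) * k) * Real.exp (-c * S p W) := by
          rw [← Real.exp_add]
          exact Real.one_le_exp (by nlinarith)
        have h2 : Φ W ≤ Real.exp (c * (1-ε) * k) * (Real.exp (-c * S p W) * Φ W) := by
          rw [← mul_assoc]
          nth_rewrite 1 [← one_mul (Φ W)]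
          exact mul_le_mul_of_nonneg_right h1 (hΦpos W).le
        have h3 : (0:ℝ) ≤ Real.exp (-(c * (1+ε) * k)) * (Real.exp (c * S p W) * Φ W) := by
          have := (hΦpos W).le; positivity
        linarith
    calc Φ W ≤ _ := hkey
      _ ≤ F W := Finset.single_le_sum hnonneg (Finset.mem_univ p)
  have : (1:ℝ) ≤ ∫ W, F W := by
    rw [← (omega_phi k m).1]
    exact integral_mono hΦint hFint hFge
  linarith

set_option maxHeartbeats 2000000 in
/-- **Johnson–Lindenstrauss Lemma.**
There is a universal constant `K > 0` such that for every `ε ∈ (0,1)`, every `n ≥ 2`,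
every `m`, every family of points `a : Fin n → ℝ^m`, and every `k ≥ K · ε⁻² · ln n`,
there is a linear map `T : ℝ^m → ℝ^k` with
`(1-ε)·‖a i - a j‖ ≤ ‖T (a i) - T (a j)‖ ≤ (1+ε)·‖a i - a j‖` for all `i, j`. -/
theorem johnson_lindenstrauss :
    ∃ K : ℝ, K > 0 ∧
      ∀ ε : ℝ, ε ∈ Set.Ioo (0 : ℝ) 1 →
        ∀ n : ℕ, 2 ≤ n →
          ∀ m : ℕ, ∀ a : Fin n → EuclideanSpace ℝ (Fin m),
            ∀ k : ℕ, K * ε⁻¹ ^ 2 * Real.log n ≤ (k : ℝ) →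
              ∃ T : EuclideanSpace ℝ (Fin m) →ₗ[ℝ] EuclideanSpace ℝ (Fin k),
                ∀ i j : Fin n,
                  (1 - ε) * ‖a i - a j‖ ≤ ‖T (a i) - T (a j)‖ ∧
                  ‖T (a i) - T (a j)‖ ≤ (1 + ε) * ‖a i - a j‖ := by
  classical
  refine ⟨25, by norm_num, ?_⟩
  intro ε hε n hn m a k hk
  obtain ⟨hε0, hε1⟩ := hε
  have hlog2 : (0:ℝ) < Real.log 2 := Real.log_pos (by norm_num)
  have hlogn2 : Real.log 2 ≤ Real.log n := by
    apply Real.log_le_log (by norm_num)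
    exact_mod_cast hn
  have hlogn : (0:ℝ) < Real.log n := lt_of_lt_of_le hlog2 hlogn2
  have hinv1 : (1:ℝ) ≤ ε⁻¹ := by
    have := inv_anti₀ hε0 hε1.le
    simpa using this
  have hinvsq : (1:ℝ) ≤ ε⁻¹ ^ 2 := by nlinarith
  have hkpos : (0:ℝ) < k := by
    calc (0:ℝ) < 25 * ε⁻¹ ^ 2 * Real.log n := by positivity
      _ ≤ k := hk
  have hknat : k ≠ 0 := by
    intro h; rw [h] at hkpos; norm_num at hkpos
  -- the index type of relevant pairs
  set ι := {p : Fin n × Fin n // a p.1 ≠ a p.2} with hι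
  set u : ι → EuclideanSpace ℝ (Fin m) :=
    fun p => ‖a p.1.1 - a p.1.2‖⁻¹ • (a p.1.1 - a p.1.2) with hu_def
  have hu : ∀ p : ι, ‖u p‖ = 1 := by
    intro p
    have hd : a p.1.1 - a p.1.2 ≠ 0 := sub_ne_zero.2 p.2
    rw [hu_def, norm_smul, norm_inv, norm_norm,
      inv_mul_cancel₀ (norm_ne_zero_iff.2 hd)]
  -- the union bound
  have hA : (ε^2/8) * k ≥ 25/8 * Real.log n := by
    have h1 : 25 * ε⁻¹ ^ 2 * Real.log n * ε^2 ≤ (k:ℝ) * ε^2 :=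
      mul_le_mul_of_nonneg_right hk (by positivity)
    have h2 : 25 * ε⁻¹ ^ 2 * Real.log n * ε^2 = 25 * Real.log n := by
      field_simp
    nlinarith
  have hcard : ((Fintype.card ι : ℝ)) * (2 * Real.exp (-(ε^2/8) * k)) < 1 := by
    have hcle : (Fintype.card ι : ℝ) ≤ (n:ℝ) * n := by
      have := Fintype.card_subtype_le (fun p : Fin n × Fin n => a p.1 ≠ a p.2)
      have h2 : (Fintype.card ι : ℝ) ≤ (Fintype.card (Fin n × Fin n) : ℝ) := by exact_mod_cast this
      simpa using h2
    have hexp : Real.exp (-(ε^2/8) * k) < (2 * (n:ℝ) * n)⁻¹ := by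
      have hpos : (0:ℝ) < 2 * (n:ℝ) * n := by
        have : (0:ℝ) < n := by positivity
        positivity
      rw [show ((2:ℝ) * n * n)⁻¹ = Real.exp (Real.log ((2 * n * n)⁻¹)) by
        rw [Real.exp_log (by positivity)]]
      apply Real.exp_lt_exp.2
      rw [Real.log_inv]
      have hnn : (0:ℝ) < n := by positivity
      rw [Real.log_mul (by positivity) hnn.ne', Real.log_mul (by norm_num) hnn.ne']
      have : Real.log 2 + Real.log n + Real.log n < 25/8 * Real.log n := by linarith
      linarith [hA]
    have hle : (Fintype.card ι : ℝ) * (2 * Real.exp (-(ε^2/8) * k))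
        ≤ ((n:ℝ) * n) * (2 * Real.exp (-(ε^2/8) * k)) := by
      apply mul_le_mul_of_nonneg_right hcle (by positivity)
    calc (Fintype.card ι : ℝ) * (2 * Real.exp (-(ε^2/8) * k))
        ≤ ((n:ℝ) * n) * (2 * Real.exp (-(ε^2/8) * k)) := hle
      _ < ((n:ℝ) * n) * (2 * (2 * (n:ℝ) * n)⁻¹) := by
          have hnn : (0:ℝ) < (n:ℝ) * n := by positivity
          apply mul_lt_mul_of_pos_left _ hnn
          exact mul_lt_mul_of_pos_left hexp (by norm_num)
      _ = 1 := by
          have hnn : ((n:ℝ)) ≠ 0 := by positivity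
          field_simp
  obtain ⟨W, hW⟩ := exists_good ε ⟨hε0, hε1⟩ k m u hu hcard
  -- construct the linear map
  set T : EuclideanSpace ℝ (Fin m) →ₗ[ℝ] EuclideanSpace ℝ (Fin k) :=
    (WithLp.linearEquiv 2 ℝ (Fin k → ℝ)).symm.toLinearMap.comp
      (LinearMap.pi (fun i : Fin k =>
        (Real.sqrt k)⁻¹ • ((innerSL ℝ (W i)).toLinearMap : EuclideanSpace ℝ (Fin m) →ₗ[ℝ] ℝ)))
    with hT
  have hTapp : ∀ (x : EuclideanSpace ℝ (Fin m)) (i : Fin k),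
      T x i = (Real.sqrt k)⁻¹ * (inner ℝ (W i) x : ℝ) := by
    intro x i; rfl
  refine ⟨T, ?_⟩
  intro i j
  by_cases hij : a i = a j
  · simp [hij]
  · set d := a i - a j with hd
    have hdne : d ≠ 0 := sub_ne_zero.2 hij
    set r := ‖d‖ with hr
    have hrpos : 0 < r := norm_pos_iff.2 hdne
    set p : ι := ⟨(i, j), hij⟩ with hp
    have hup : u p = r⁻¹ • d := rfl
    have hsum := hW p
    -- norm of T d squared
    have hTd : T (a i) - T (a j) = T d := by rw [hd, map_sub]
    have hnormsq : ‖T d‖^2 = (k:ℝ)⁻¹ * (r^2 * ∑ i', (inner ℝ (u p) (W i') : ℝ)^2) := by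
      rw [EuclideanSpace.norm_eq, Real.sq_sqrt (by positivity)]
      rw [Finset.mul_sum, Finset.mul_sum]
      congr 1 with i'
      rw [hTapp]
      have hinner : (inner ℝ (W i') d : ℝ) = r * (inner ℝ (u p) (W i') : ℝ) := by
        rw [hup, real_inner_smul_left, real_inner_comm]
        field_simp
      rw [Real.norm_eq_abs, sq_abs, mul_pow, hinner, mul_pow]
      rw [show ((Real.sqrt k)⁻¹)^2 = (k:ℝ)⁻¹ by
        rw [inv_pow, Real.sq_sqrt hkpos.le]]
      try ring
    have hlow : (1-ε) * r^2 ≤ ‖T d‖^2 := by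
      rw [hnormsq]
      have h1 : (1-ε) * k ≤ ∑ i', (inner ℝ (u p) (W i') : ℝ)^2 := hsum.1
      have h2 : (k:ℝ)⁻¹ * (r^2 * ((1-ε)*k)) ≤ (k:ℝ)⁻¹ * (r^2 * ∑ i', (inner ℝ (u p) (W i') : ℝ)^2) := by
        apply mul_le_mul_of_nonneg_left _ (by positivity)
        apply mul_le_mul_of_nonneg_left h1 (by positivity)
      calc (1-ε) * r^2 = (k:ℝ)⁻¹ * (r^2 * ((1-ε)*k)) := by
            field_simp
        _ ≤ _ := h2
    have hhigh : ‖T d‖^2 ≤ (1+ε) * r^2 := by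
      rw [hnormsq]
      have h1 : ∑ i', (inner ℝ (u p) (W i') : ℝ)^2 ≤ (1+ε) * k := hsum.2
      have h2 : (k:ℝ)⁻¹ * (r^2 * ∑ i', (inner ℝ (u p) (W i') : ℝ)^2)
          ≤ (k:ℝ)⁻¹ * (r^2 * ((1+ε)*k)) := by
        apply mul_le_mul_of_nonneg_left _ (by positivity)
        apply mul_le_mul_of_nonneg_left h1 (by positivity)
      calc (k:ℝ)⁻¹ * (r^2 * ∑ i', (inner ℝ (u p) (W i') : ℝ)^2) ≤ (k:ℝ)⁻¹ * (r^2 * ((1+ε)*k)) := h2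
        _ = (1+ε) * r^2 := by field_simp
    rw [hTd]
    constructor
    · -- lower bound
      have hsq : ((1-ε) * r)^2 ≤ ‖T d‖^2 := by
        have : ((1-ε)*r)^2 = (1-ε)^2 * r^2 := by ring
        rw [this]
        have h1 : (1-ε)^2 * r^2 ≤ (1-ε) * r^2 := by nlinarith
        linarith
      have h1 : 0 ≤ (1-ε) * r := by nlinarith
      nlinarith [norm_nonneg (T d)]
    · have hsq : ‖T d‖^2 ≤ ((1+ε) * r)^2 := by
        have : ((1+ε)*r)^2 = (1+ε)^2 * r^2 := by ring
        rw [this]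
        have h1 : (1+ε) * r^2 ≤ (1+ε)^2 * r^2 := by nlinarith
        linarith
      calc ‖T d‖ = Real.sqrt (‖T d‖^2) := (Real.sqrt_sq (norm_nonneg _)).symm
        _ ≤ Real.sqrt (((1+ε)*r)^2) := Real.sqrt_le_sqrt hsq
        _ = (1+ε)*r := Real.sqrt_sq (by positivity)
end

section
/- (Random projection lemma, Gaussian case) There exists a constant C > 0, independent of m, k and ε, such that for every m, k ∈ ℕ with k ≥ 1, every ε ∈ (0,1), and every vector x ∈ ℝ^m, the probability, with respect to the product Gaussian measure on k×m real matrices P (each entry i.i.d. standard normal N(0,1)), of the event {(1−ε)·‖x‖ ≤ ‖T_P(x)‖ ≤ (1+ε)·‖x‖} is at least 1 − 2·exp(−C·ε²·k), where T_P(x) = (1/√k)·P·x. -/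
open MeasureTheory ProbabilityTheory ENNReal

/-- The product Gaussian measure on `k × m` real matrices: each entry is an independent
standard normal `N(0,1)` random variable. -/
noncomputable def gaussMeasure (k m : ℕ) : Measure (Fin k → Fin m → ℝ) :=
  Measure.pi fun _ : Fin k => Measure.pi fun _ : Fin m => gaussianReal 0 1

/-- The random linear map associated to a `k × m` matrix `P`: `T_P(x) = (1/√k) · P · x`. -/
noncomputable def TP {k m : ℕ} (P : Fin k → Fin m → ℝ)
    (x : EuclideanSpace ℝ (Fin m)) : EuclideanSpace ℝ (Fin k) :=
  (Real.sqrt k)⁻¹ • (EuclideanSpace.equiv (Fin k) ℝ).symm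
    ((Matrix.of P).mulVec (EuclideanSpace.equiv (Fin m) ℝ x))

noncomputable section


lemma stdPDF_eq (z : ℝ) :
    gaussianPDFReal 0 1 z = (Real.sqrt (2 * Real.pi))⁻¹ * Real.exp (-(z ^ 2) / 2) := by
  simp [gaussianPDFReal]

lemma integral_std {E : Type*} [NormedAddCommGroup E] [NormedSpace ℝ E] (g : ℝ → E) :
    ∫ z, g z ∂(gaussianReal 0 1) = ∫ z, gaussianPDFReal 0 1 z • g z := by
  rw [gaussianReal_of_var_ne_zero _ one_ne_zero]
  have h : (gaussianPDF 0 1) = fun x => ((gaussianPDFReal 0 1 x).toNNReal : ENNReal) := rfl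
  rw [h, integral_withDensity_eq_integral_smul ((measurable_gaussianPDFReal 0 1).real_toNNReal)]
  congr 1
  funext z
  rw [NNReal.smul_def, Real.coe_toNNReal _ (gaussianPDFReal_nonneg 0 1 z)]

lemma integrable_std_iff {E : Type*} [NormedAddCommGroup E] [NormedSpace ℝ E] (g : ℝ → E) :
    Integrable g (gaussianReal 0 1) ↔
      Integrable (fun z => gaussianPDFReal 0 1 z • g z) volume := by
  rw [gaussianReal_of_var_ne_zero _ one_ne_zero]
  have h : (gaussianPDF 0 1) = fun x => ((gaussianPDFReal 0 1 x).toNNReal : ENNReal) := rfl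
  rw [h, integrable_withDensity_iff_integrable_smul ((measurable_gaussianPDFReal 0 1).real_toNNReal)]
  constructor <;> intro hh <;> refine hh.congr (Filter.Eventually.of_forall fun z => ?_) <;>
    simp only [NNReal.smul_def, Real.coe_toNNReal _ (gaussianPDFReal_nonneg 0 1 z)]

lemma pdf_smul_cexp (γ : ℂ) (z : ℝ) :
    gaussianPDFReal 0 1 z • Complex.exp (γ * z)
      = (Real.sqrt (2 * Real.pi))⁻¹ • Complex.exp (-(1/2 : ℂ) * (z : ℂ) ^ 2 + γ * z + 0) := by
  rw [stdPDF_eq, mul_smul]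
  congr 1
  rw [Complex.real_smul, Complex.ofReal_exp, ← Complex.exp_add]
  congr 1
  push_cast
  ring

lemma integrable_cmgf (γ : ℂ) :
    Integrable (fun z : ℝ => Complex.exp (γ * z)) (gaussianReal 0 1) := by
  rw [integrable_std_iff]
  have h : (fun z : ℝ => gaussianPDFReal 0 1 z • Complex.exp (γ * z))
      = fun z : ℝ => (Real.sqrt (2 * Real.pi))⁻¹ • Complex.exp (-(1/2 : ℂ) * (z : ℂ) ^ 2 + γ * z + 0) := by
    funext z; exact pdf_smul_cexp γ z
  rw [h]
  have hb : (0 : ℝ) < ((1/2 : ℂ)).re := by norm_num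
  exact ((integrable_cexp_quadratic hb γ 0).smul ((Real.sqrt (2 * Real.pi))⁻¹ : ℝ)).congr
    (Filter.Eventually.of_forall fun z => rfl)

lemma cmgf_key (γ : ℂ) :
    (∫ z, Complex.exp (γ * z) ∂(gaussianReal 0 1)) = Complex.exp (γ ^ 2 / 2) := by
  rw [integral_std]
  have h : (fun z : ℝ => gaussianPDFReal 0 1 z • Complex.exp (γ * z))
      = fun z : ℝ => (Real.sqrt (2 * Real.pi))⁻¹ • Complex.exp (-(1/2 : ℂ) * (z : ℂ) ^ 2 + γ * z + 0) := by
    funext z; exact pdf_smul_cexp γ z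
  rw [h, integral_smul]
  have hb : (-(1/2 : ℂ)).re < 0 := by norm_num
  rw [integral_cexp_quadratic hb γ 0]
  have h2 : ((Real.pi : ℂ) / -(-(1/2 : ℂ))) = ((2 * Real.pi : ℝ) : ℂ) := by push_cast; ring
  have h3 : ((2 * Real.pi : ℝ) : ℂ) ^ (1/2 : ℂ) = ((Real.sqrt (2 * Real.pi) : ℝ) : ℂ) := by
    rw [Real.sqrt_eq_rpow]
    rw [Complex.ofReal_cpow (by positivity)]
    norm_num
  rw [h2, h3]
  have h4 : (0 : ℂ) - γ ^ 2 / (4 * -(1/2 : ℂ)) = γ ^ 2 / 2 := by ring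
  rw [h4, Complex.real_smul, ← mul_assoc, ← Complex.ofReal_mul,
    inv_mul_cancel₀ (by positivity : Real.sqrt (2 * Real.pi) ≠ 0)]
  simp

lemma integrable_rmgf (c : ℝ) :
    Integrable (fun z : ℝ => Real.exp (c * z)) (gaussianReal 0 1) := by
  have h := (integrable_cmgf (c : ℂ)).norm
  refine h.congr (Filter.Eventually.of_forall fun z => ?_)
  show ‖Complex.exp ((c : ℂ) * z)‖ = _
  rw [Complex.norm_exp]
  norm_num

lemma rmgf_key (c : ℝ) :
    ∫ z, Real.exp (c * z) ∂(gaussianReal 0 1) = Real.exp (c ^ 2 / 2) := by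
  have h2 := integral_re (𝕜 := ℂ) (integrable_cmgf (c : ℂ))
  rw [cmgf_key (c : ℂ)] at h2
  have e1 : ∀ z : ℝ, RCLike.re (Complex.exp ((c : ℂ) * z)) = Real.exp (c * z) := by
    intro z
    rw [RCLike.re_to_complex, ← Complex.ofReal_mul, Complex.exp_ofReal_re]
  rw [show (fun z : ℝ => Real.exp (c * z))
      = fun z : ℝ => RCLike.re (K := ℂ) (Complex.exp ((c : ℂ) * z)) from
    funext fun z => (e1 z).symm]
  rw [h2, RCLike.re_to_complex,
    show ((c : ℂ) ^ 2 / 2) = ((c ^ 2 / 2 : ℝ) : ℂ) by push_cast; ring,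
    Complex.exp_ofReal_re]

lemma integrable_gsq {a : ℝ} (ha : a < 1/2) :
    Integrable (fun z : ℝ => Real.exp (a * z ^ 2)) (gaussianReal 0 1) := by
  rw [integrable_std_iff]
  have h : (fun z : ℝ => gaussianPDFReal 0 1 z • Real.exp (a * z ^ 2))
      = fun z : ℝ => (Real.sqrt (2 * Real.pi))⁻¹ * Real.exp (-(1/2 - a) * z ^ 2) := by
    funext z
    rw [stdPDF_eq, smul_eq_mul, mul_assoc, ← Real.exp_add]
    congr 1
    ring
  rw [h]
  exact (integrable_exp_neg_mul_sq (by linarith)).const_mul _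

lemma gsq_key {a : ℝ} (ha : a < 1/2) :
    ∫ z, Real.exp (a * z ^ 2) ∂(gaussianReal 0 1) = (Real.sqrt (1 - 2 * a))⁻¹ := by
  rw [integral_std]
  have h : (fun z : ℝ => gaussianPDFReal 0 1 z • Real.exp (a * z ^ 2))
      = fun z : ℝ => (Real.sqrt (2 * Real.pi))⁻¹ * Real.exp (-(1/2 - a) * z ^ 2) := by
    funext z
    rw [stdPDF_eq, smul_eq_mul, mul_assoc, ← Real.exp_add]
    congr 1
    ring
  rw [h, integral_const_mul, integral_gaussian]
  rw [← Real.sqrt_inv, ← Real.sqrt_inv, ← Real.sqrt_mul (by positivity)]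
  congr 1
  have h1 : (1:ℝ)/2 - a ≠ 0 := by linarith
  have h2 : (1:ℝ) - 2 * a ≠ 0 := by intro hh; apply h1; linarith
  field_simp

section
variable {m : ℕ} (x : Fin m → ℝ)

lemma row_key (x : Fin m → ℝ) {t : ℝ} (ht : 2 * t * (∑ j, x j ^ 2) < 1) :
    Integrable (fun r : Fin m → ℝ => Real.exp (t * (∑ j, r j * x j) ^ 2))
      (Measure.pi fun _ : Fin m => gaussianReal 0 1) ∧
    ∫ r, Real.exp (t * (∑ j, r j * x j) ^ 2) ∂(Measure.pi fun _ : Fin m => gaussianReal 0 1)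
      = (Real.sqrt (1 - 2 * t * ∑ j, x j ^ 2))⁻¹ := by
  letI : MeasureSpace ℝ := ⟨gaussianReal 0 1⟩
  haveI : IsProbabilityMeasure (volume : Measure ℝ) :=
    inferInstanceAs (IsProbabilityMeasure (gaussianReal 0 1))
  haveI : SigmaFinite (volume : Measure ℝ) := inferInstance
  set σ₂ : ℝ := ∑ j, x j ^ 2 with hσ₂def
  have hσ₂ : 0 ≤ σ₂ := Finset.sum_nonneg fun j _ => sq_nonneg _
  set ν : Measure (Fin m → ℝ) := Measure.pi fun _ : Fin m => gaussianReal 0 1 with hνdef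
  set f : (Fin m → ℝ) → ℝ := fun r => ∑ j, r j * x j with hfdef
  -- the complex square root of 2t
  set b : ℂ := if 0 ≤ t then (Real.sqrt (2*t) : ℂ) else (Real.sqrt (-(2*t)) : ℂ) * Complex.I
    with hbdef
  have hb2 : b ^ 2 = (2 * t : ℝ) := by
    rw [hbdef]
    split_ifs with h
    · rw [← Complex.ofReal_pow, Real.sq_sqrt (by linarith)]
    · rw [mul_pow, Complex.I_sq, ← Complex.ofReal_pow, Real.sq_sqrt (by linarith)]
      push_cast
      ring
  have hbre : b.re ^ 2 = max (2 * t) 0 := by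
    rw [hbdef]
    split_ifs with h
    · rw [Complex.ofReal_re, Real.sq_sqrt (by linarith : (0:ℝ) ≤ 2 * t)]
      exact (max_eq_left (by linarith)).symm
    · have h' : t < 0 := not_le.mp h
      have : ((Real.sqrt (-(2*t)) : ℂ) * Complex.I).re = 0 := by simp
      rw [this]
      simp [max_eq_right (by linarith : 2 * t ≤ 0)]
  -- factorization of exp(c * f r) as a product
  have hfact : ∀ c : ℂ, (fun r : Fin m → ℝ => Complex.exp (c * f r))
      = fun r : Fin m → ℝ => ∏ j, Complex.exp ((c * x j) * r j) := by
    intro c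
    funext r
    rw [← Complex.exp_sum]
    congr 1
    rw [hfdef]
    push_cast
    rw [Finset.mul_sum]
    exact Finset.sum_congr rfl fun j _ => by ring
  have hrow_int : ∀ c : ℂ, Integrable (fun r : Fin m → ℝ => Complex.exp (c * f r)) ν := by
    intro c
    rw [hfact c]
    exact Integrable.fintype_prod (f := fun j (w : ℝ) => Complex.exp ((c * x j) * (w : ℂ)))
      fun j => integrable_cmgf (c * (x j : ℂ))
  have hrow_val : ∀ c : ℂ, ∫ r, Complex.exp (c * f r) ∂ν = Complex.exp (c ^ 2 * σ₂ / 2) := by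
    intro c
    rw [hfact c, show ν = (volume : Measure (Fin m → ℝ)) from rfl]
    rw [integral_fintype_prod_volume_eq_prod (ι := Fin m) (fun j (w : ℝ) => Complex.exp ((c * x j) * (w : ℂ)))]
    have : ∀ j, ∫ w : ℝ, Complex.exp ((c * x j) * w) = Complex.exp ((c * x j) ^ 2 / 2) :=
      fun j => cmgf_key _
    rw [Finset.prod_congr rfl fun j _ => this j, ← Complex.exp_sum]
    congr 1
    rw [hσ₂def]
    push_cast
    rw [Finset.mul_sum, Finset.sum_div]
    exact Finset.sum_congr rfl fun j _ => by ring
  have hfm : Measurable f :=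
    Finset.measurable_sum Finset.univ (fun j _ => by fun_prop)
  -- real row factorization
  have hfactR : ∀ c : ℝ, (fun r : Fin m → ℝ => Real.exp (c * f r))
      = fun r : Fin m → ℝ => ∏ j, Real.exp ((c * x j) * r j) := by
    intro c
    funext r
    rw [← Real.exp_sum]
    congr 1
    rw [hfdef, Finset.mul_sum]
    exact Finset.sum_congr rfl fun j _ => by ring
  have hrow_intR : ∀ c : ℝ, Integrable (fun r : Fin m → ℝ => Real.exp (c * f r)) ν := by
    intro c
    rw [hfactR c]
    exact Integrable.fintype_prod (f := fun j (w : ℝ) => Real.exp ((c * x j) * w))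
      fun j => integrable_rmgf (c * x j)
  have hrow_valR : ∀ c : ℝ, ∫ r, Real.exp (c * f r) ∂ν = Real.exp (c ^ 2 * σ₂ / 2) := by
    intro c
    rw [hfactR c, show ν = (volume : Measure (Fin m → ℝ)) from rfl]
    rw [integral_fintype_prod_volume_eq_prod (ι := Fin m) (fun j (w : ℝ) => Real.exp ((c * x j) * w))]
    have h1 : ∀ j, (∫ w : ℝ, Real.exp ((c * x j) * w)) = Real.exp ((c * x j) ^ 2 / 2) :=
      fun j => rmgf_key _
    rw [Finset.prod_congr rfl fun j _ => h1 j, ← Real.exp_sum]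
    congr 1
    rw [hσ₂def, Finset.mul_sum, Finset.sum_div]
    exact Finset.sum_congr rfl fun j _ => by ring
  -- the two-variable function for the Hubbard-Stratonovich trick
  set H : ((Fin m → ℝ) × ℝ) → ℂ := fun p => Complex.exp ((b * p.2) * f p.1) with hHdef
  have hHm : Measurable H := by
    apply Complex.measurable_exp.comp
    exact ((measurable_const.mul (Complex.measurable_ofReal.comp measurable_snd)).mul
      (Complex.measurable_ofReal.comp (hfm.comp measurable_fst)))
  have hnormH : ∀ z : ℝ, (fun r : Fin m → ℝ => ‖H (r, z)‖)
      = fun r : Fin m → ℝ => Real.exp ((b.re * z) * f r) := by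
    intro z
    funext r
    show ‖Complex.exp ((b * (z : ℂ)) * (f r : ℂ))‖ = _
    rw [Complex.norm_exp]
    congr 1
    rw [mul_comm (b * (z : ℂ)) ((f r : ℂ)), Complex.re_ofReal_mul, mul_comm b ((z : ℂ)),
      Complex.re_ofReal_mul]
    ring
  have ha2 : b.re ^ 2 * σ₂ / 2 < 1 / 2 := by
    rcases le_or_gt t 0 with h | h
    · rw [hbre, max_eq_right (by linarith : 2 * t ≤ 0)]
      norm_num
    · rw [hbre, max_eq_left (by linarith : (0:ℝ) ≤ 2 * t)]
      linarith
  have hH_int : Integrable H (ν.prod (gaussianReal 0 1)) := by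
    rw [integrable_prod_iff' hHm.aestronglyMeasurable]
    constructor
    · exact Filter.Eventually.of_forall fun z => hrow_int (b * (z : ℂ))
    · have heq : (fun z : ℝ => ∫ r, ‖H (r, z)‖ ∂ν)
          = fun z : ℝ => Real.exp ((b.re ^ 2 * σ₂ / 2) * z ^ 2) := by
        funext z
        rw [hnormH z, hrow_valR (b.re * z)]
        congr 1
        ring
      rw [heq]
      exact integrable_gsq ha2
  have hHS : ∀ r : Fin m → ℝ, ((Real.exp (t * f r ^ 2) : ℝ) : ℂ)
      = ∫ z, H (r, z) ∂(gaussianReal 0 1) := by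
    intro r
    have h1 : (fun z : ℝ => H (r, z)) = fun z : ℝ => Complex.exp ((b * (f r : ℂ)) * z) := by
      funext z
      show Complex.exp _ = _
      congr 1
      ring
    rw [h1, cmgf_key (b * (f r : ℂ))]
    rw [Complex.ofReal_exp]
    congr 1
    rw [mul_pow, hb2]
    push_cast
    ring
  have hGc_int : Integrable (fun r : Fin m → ℝ => ((Real.exp (t * f r ^ 2) : ℝ) : ℂ)) ν :=
    (hH_int.integral_prod_left).congr (Filter.Eventually.of_forall fun r => (hHS r).symm)
  have hint_real : Integrable (fun r : Fin m → ℝ => Real.exp (t * f r ^ 2)) ν := by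
    refine hGc_int.norm.congr (Filter.Eventually.of_forall fun r => ?_)
    show ‖((Real.exp (t * f r ^ 2) : ℝ) : ℂ)‖ = _
    rw [Complex.norm_real, Real.norm_eq_abs, abs_of_nonneg (Real.exp_nonneg _)]
  have hts : t * σ₂ < 1 / 2 := by linarith
  have hval_c : ∫ r, ((Real.exp (t * f r ^ 2) : ℝ) : ℂ) ∂ν
      = (((Real.sqrt (1 - 2 * t * σ₂))⁻¹ : ℝ) : ℂ) := by
    calc ∫ r, ((Real.exp (t * f r ^ 2) : ℝ) : ℂ) ∂ν
        = ∫ r, (∫ z, H (r, z) ∂(gaussianReal 0 1)) ∂ν := by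
          rw [show (fun r : Fin m → ℝ => ((Real.exp (t * f r ^ 2) : ℝ) : ℂ))
            = fun r => ∫ z, H (r, z) ∂(gaussianReal 0 1) from funext hHS]
      _ = ∫ p, H p ∂(ν.prod (gaussianReal 0 1)) := (integral_prod _ hH_int).symm
      _ = ∫ z, ∫ r, H (r, z) ∂ν ∂(gaussianReal 0 1) := integral_prod_symm _ hH_int
      _ = ∫ z : ℝ, Complex.exp ((b * (z : ℂ)) ^ 2 * σ₂ / 2) ∂(gaussianReal 0 1) := by
          congr 1
          funext z
          exact hrow_val (b * (z : ℂ))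
      _ = ∫ z : ℝ, ((Real.exp ((t * σ₂) * z ^ 2) : ℝ) : ℂ) ∂(gaussianReal 0 1) := by
          congr 1
          funext z
          rw [Complex.ofReal_exp]
          congr 1
          rw [mul_pow, hb2]
          push_cast
          ring
      _ = (((∫ z : ℝ, Real.exp ((t * σ₂) * z ^ 2) ∂(gaussianReal 0 1)) : ℝ) : ℂ) :=
          integral_ofReal
      _ = (((Real.sqrt (1 - 2 * t * σ₂))⁻¹ : ℝ) : ℂ) := by
          rw [gsq_key hts]
          norm_num
          rw [show 1 - 2 * (t * σ₂) = 1 - 2 * t * σ₂ by ring]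
  refine ⟨hint_real, ?_⟩
  have h2 := integral_re hGc_int
  rw [hval_c] at h2
  rw [show (fun r : Fin m → ℝ => Real.exp (t * f r ^ 2))
      = fun r => RCLike.re (K := ℂ) ((Real.exp (t * f r ^ 2) : ℝ) : ℂ) from
    funext fun r => by rw [RCLike.re_to_complex, Complex.ofReal_re]]
  rw [h2, RCLike.re_to_complex, Complex.ofReal_re]

end

lemma num_upper {ε : ℝ} (h0 : 0 < ε) (h1 : ε < 1) :
    Real.exp (-(ε/4) * (1+ε)^2) * (Real.sqrt (1 - ε/2))⁻¹ ≤ Real.exp (-(ε^2/8)) := by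
  set q : ℝ := (ε/4) * (1+ε)^2 - ε^2/8 with hq
  have hpos : (0:ℝ) < 1 - ε/2 := by linarith
  have key : (1 - ε/2)⁻¹ ≤ 1 + 2*q := by
    rw [inv_eq_one_div, div_le_iff₀ hpos]
    nlinarith [pow_pos h0 2, pow_pos h0 3, pow_pos h0 4, sq_nonneg ε, sq_nonneg (1-ε)]
  have h2 : (Real.sqrt (1 - ε/2))⁻¹ ≤ Real.exp q := by
    rw [← Real.sqrt_inv]
    have h3 : (1 - ε/2)⁻¹ ≤ Real.exp (2*q) := le_trans key (by
      have := Real.add_one_le_exp (2*q); linarith)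
    calc Real.sqrt (1 - ε/2)⁻¹ ≤ Real.sqrt (Real.exp (2*q)) := Real.sqrt_le_sqrt h3
      _ = Real.exp q := by
          rw [show Real.exp (2*q) = (Real.exp q)^2 by
              rw [pow_two, ← Real.exp_add]; congr 1; ring,
            Real.sqrt_sq (Real.exp_nonneg q)]
  calc Real.exp (-(ε/4) * (1+ε)^2) * (Real.sqrt (1 - ε/2))⁻¹
      ≤ Real.exp (-(ε/4) * (1+ε)^2) * Real.exp q :=
        mul_le_mul_of_nonneg_left h2 (Real.exp_nonneg _)
    _ = Real.exp (-(ε^2/8)) := by rw [← Real.exp_add]; congr 1; rw [hq]; ring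

lemma num_lower {ε : ℝ} (h0 : 0 < ε) (h1 : ε < 1) :
    Real.exp ((ε/4) * (1-ε)^2) * (Real.sqrt (1 + ε/2))⁻¹ ≤ Real.exp (-(ε^2/8)) := by
  set r : ℝ := (ε/4) * (1-ε)^2 + ε^2/8 with hr
  have h2r : 2*r < 1 := by rw [hr]; nlinarith [sq_nonneg (1-ε), sq_nonneg ε]
  have hr0 : 0 < r := by positivity
  have key : 1 ≤ (1 + ε/2) * (1 - 2*r) := by
    nlinarith [pow_pos h0 2, pow_pos h0 3, pow_pos h0 4, sq_nonneg ε, sq_nonneg (1-ε)]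
  have h1r : 0 < 1 - 2*r := by linarith
  have hexp : Real.exp (2*r) ≤ 1 + ε/2 := by
    have ha := Real.add_one_le_exp (-(2*r))
    have hb : (1 - 2*r) * Real.exp (2*r) ≤ 1 := by
      have h5 := mul_le_mul_of_nonneg_right ha (Real.exp_nonneg (2*r))
      rw [← Real.exp_add] at h5
      simp only [neg_add_cancel, Real.exp_zero] at h5
      nlinarith [Real.exp_nonneg (2*r)]
    have hc : Real.exp (2*r) ≤ 1/(1 - 2*r) := by
      rw [le_div_iff₀ h1r]
      nlinarith
    refine le_trans hc ?_
    rw [div_le_iff₀ h1r]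
    linarith [key]
  have h2 : Real.exp r ≤ Real.sqrt (1 + ε/2) := by
    rw [Real.le_sqrt (Real.exp_nonneg r) (by linarith)]
    rw [show Real.exp r ^ 2 = Real.exp (2*r) by
      rw [pow_two, ← Real.exp_add]; congr 1; ring]
    exact hexp
  have h3 : (Real.sqrt (1 + ε/2))⁻¹ ≤ (Real.exp r)⁻¹ :=
    inv_anti₀ (Real.exp_pos r) h2
  calc Real.exp ((ε/4) * (1-ε)^2) * (Real.sqrt (1 + ε/2))⁻¹
      ≤ Real.exp ((ε/4) * (1-ε)^2) * (Real.exp r)⁻¹ :=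
        mul_le_mul_of_nonneg_left h3 (Real.exp_nonneg _)
    _ = Real.exp (-(ε^2/8)) := by
        rw [← Real.exp_neg, ← Real.exp_add]; congr 1; rw [hr]; ring

lemma mgf_S {m k : ℕ} (x : Fin m → ℝ) {t : ℝ} (ht : 2 * t * (∑ j, x j ^ 2) < 1) :
    Integrable (fun P : Fin k → Fin m → ℝ => Real.exp (t * ∑ i, (∑ j, P i j * x j) ^ 2))
      (Measure.pi fun _ : Fin k => Measure.pi fun _ : Fin m => gaussianReal 0 1) ∧
    ∫ P, Real.exp (t * ∑ i, (∑ j, P i j * x j) ^ 2)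
        ∂(Measure.pi fun _ : Fin k => Measure.pi fun _ : Fin m => gaussianReal 0 1)
      = ((Real.sqrt (1 - 2 * t * ∑ j, x j ^ 2))⁻¹) ^ k := by
  letI : MeasureSpace ℝ := ⟨gaussianReal 0 1⟩
  haveI : IsProbabilityMeasure (volume : Measure ℝ) :=
    inferInstanceAs (IsProbabilityMeasure (gaussianReal 0 1))
  haveI : SigmaFinite (volume : Measure ℝ) := inferInstance
  haveI : IsProbabilityMeasure (volume : Measure (Fin m → ℝ)) :=
    inferInstanceAs (IsProbabilityMeasure (Measure.pi fun _ : Fin m => gaussianReal 0 1))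
  haveI : SigmaFinite (volume : Measure (Fin m → ℝ)) := inferInstance
  have hfact : (fun P : Fin k → Fin m → ℝ => Real.exp (t * ∑ i, (∑ j, P i j * x j) ^ 2))
      = fun P : Fin k → Fin m → ℝ =>
        ∏ i, (fun r : Fin m → ℝ => Real.exp (t * (∑ j, r j * x j) ^ 2)) (P i) := by
    funext P
    rw [Finset.mul_sum, Real.exp_sum]
  constructor
  · rw [hfact]
    exact Integrable.fintype_prod (f := fun (_ : Fin k) (r : Fin m → ℝ) =>
      Real.exp (t * (∑ j, r j * x j) ^ 2)) fun _ => (row_key x ht).1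
  · rw [hfact, show (Measure.pi fun _ : Fin k => Measure.pi fun _ : Fin m => gaussianReal 0 1)
      = (volume : Measure (Fin k → Fin m → ℝ)) from rfl]
    rw [integral_fintype_prod_volume_eq_pow (ι := Fin k)
      (fun r : Fin m → ℝ => Real.exp (t * (∑ j, r j * x j) ^ 2))]
    rw [show ∫ r : Fin m → ℝ, Real.exp (t * (∑ j, r j * x j) ^ 2)
      = (Real.sqrt (1 - 2 * t * ∑ j, x j ^ 2))⁻¹ from (row_key x ht).2]
    rw [Fintype.card_fin]

end

/-- **Random projection lemma (Gaussian case).**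
There is a constant `C > 0`, independent of `m`, `k` and `ε`, such that for all `m`,
`k ≥ 1`, `ε ∈ (0,1)` and `x ∈ ℝ^m`, the Gaussian measure of the set of matrices `P` with
`(1-ε)·‖x‖ ≤ ‖T_P x‖ ≤ (1+ε)·‖x‖` is at least `1 - 2·exp(-C·ε²·k)`. -/

theorem random_projection_lemma_gaussian :
    ∃ C : ℝ, C > 0 ∧
      ∀ m k : ℕ, 1 ≤ k →
        ∀ ε : ℝ, ε ∈ Set.Ioo (0 : ℝ) 1 →
          ∀ x : EuclideanSpace ℝ (Fin m),
            gaussMeasure k m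
                {P | (1 - ε) * ‖x‖ ≤ ‖TP P x‖ ∧ ‖TP P x‖ ≤ (1 + ε) * ‖x‖} ≥
              ENNReal.ofReal (1 - 2 * Real.exp (-C * ε ^ 2 * k)) := by
  refine ⟨1/8, by norm_num, fun m k hk ε hε x => ?_⟩
  obtain ⟨h0, h1⟩ := hε
  haveI : IsProbabilityMeasure (gaussMeasure k m) := by
    unfold gaussMeasure; infer_instance
  by_cases hx0 : x = 0
  · subst hx0
    have hTP0 : ∀ P : Fin k → Fin m → ℝ, TP P 0 = 0 := by
      intro P
      unfold TP
      rw [map_zero, Matrix.mulVec_zero, map_zero, smul_zero]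
    have hset : {P : Fin k → Fin m → ℝ |
        (1 - ε) * ‖(0 : EuclideanSpace ℝ (Fin m))‖ ≤ ‖TP P 0‖ ∧
          ‖TP P 0‖ ≤ (1 + ε) * ‖(0 : EuclideanSpace ℝ (Fin m))‖} = Set.univ :=
      Set.eq_univ_of_forall fun P => by simp [hTP0 P]
    rw [hset, measure_univ]
    have h2 : ENNReal.ofReal (1 - 2 * Real.exp (-(1/8) * ε^2 * (k:ℝ))) ≤ ENNReal.ofReal 1 :=
      ENNReal.ofReal_le_ofReal (by nlinarith [Real.exp_pos (-(1/8) * ε^2 * (k:ℝ))])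
    simpa using h2
  -- main case
  set σ₂ : ℝ := ∑ j, x j ^ 2 with hσ₂def
  have hnx : ‖x‖^2 = σ₂ := by
    rw [EuclideanSpace.norm_eq, Real.sq_sqrt (by positivity)]
    exact Finset.sum_congr rfl fun j _ => by rw [Real.norm_eq_abs, sq_abs]
  have hσpos : 0 < σ₂ := by
    rw [← hnx]
    have : 0 < ‖x‖ := norm_pos_iff.mpr hx0
    positivity
  have hkpos : (0:ℝ) < k := by
    have : 0 < k := lt_of_lt_of_le one_pos hk
    exact_mod_cast this
  set S : (Fin k → Fin m → ℝ) → ℝ := fun P => ∑ i, (∑ j, P i j * x j) ^ 2 with hSdef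
  have hTPsq : ∀ P, ‖TP P x‖ ^ 2 = S P / k := by
    intro P
    unfold TP
    rw [norm_smul, Real.norm_eq_abs, abs_of_nonneg (inv_nonneg.mpr (Real.sqrt_nonneg _)),
      mul_pow, EuclideanSpace.norm_eq, Real.sq_sqrt (by positivity), inv_pow,
      Real.sq_sqrt (le_of_lt hkpos)]
    rw [div_eq_mul_inv, mul_comm (S P)]
    congr 1
    refine Finset.sum_congr rfl fun i _ => ?_
    rw [Real.norm_eq_abs, sq_abs]
    rfl
  have hsq_iff : ∀ a b : ℝ, 0 ≤ a → 0 ≤ b → (a ≤ b ↔ a^2 ≤ b^2) :=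
    fun a b ha hb => (pow_le_pow_iff_left₀ ha hb two_ne_zero).symm
  have hset : {P : Fin k → Fin m → ℝ |
      (1 - ε) * ‖x‖ ≤ ‖TP P x‖ ∧ ‖TP P x‖ ≤ (1 + ε) * ‖x‖}
      = {P : Fin k → Fin m → ℝ | (1-ε)^2 * σ₂ * k ≤ S P}
        ∩ {P : Fin k → Fin m → ℝ | S P ≤ (1+ε)^2 * σ₂ * k} := by
    ext P
    simp only [Set.mem_setOf_eq, Set.mem_inter_iff]
    constructor
    · rintro ⟨hA, hB⟩
      constructor
      · have h := (hsq_iff _ _ (mul_nonneg (by linarith) (norm_nonneg _)) (norm_nonneg _)).mp hA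
        rw [hTPsq P, mul_pow, hnx] at h
        have h2 := mul_le_mul_of_nonneg_right h (le_of_lt hkpos)
        rwa [div_mul_cancel₀ _ (ne_of_gt hkpos)] at h2
      · have h := (hsq_iff _ _ (norm_nonneg _) (mul_nonneg (by linarith) (norm_nonneg _))).mp hB
        rw [hTPsq P, mul_pow, hnx] at h
        have h2 := mul_le_mul_of_nonneg_right h (le_of_lt hkpos)
        rwa [div_mul_cancel₀ _ (ne_of_gt hkpos)] at h2
    · rintro ⟨hA, hB⟩
      constructor
      · refine (hsq_iff _ _ (mul_nonneg (by linarith) (norm_nonneg _)) (norm_nonneg _)).mpr ?_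
        rw [hTPsq P, mul_pow, hnx, le_div_iff₀ hkpos]
        exact hA
      · refine (hsq_iff _ _ (norm_nonneg _) (mul_nonneg (by linarith) (norm_nonneg _))).mpr ?_
        rw [hTPsq P, mul_pow, hnx, div_le_iff₀ hkpos]
        exact hB
  have hSmeas : Measurable S := by
    apply Finset.measurable_sum
    intro i _
    have h : Measurable fun P : Fin k → Fin m → ℝ => ∑ j, P i j * x j := by
      apply Finset.measurable_sum
      intro j _
      have h1 : Measurable fun P : Fin k → Fin m → ℝ => P i j :=
        (measurable_pi_apply j).comp (measurable_pi_apply i)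
      exact h1.mul_const (x j)
    exact h.pow_const 2
  -- σ₂ for the function version of x
  have hσf : (∑ j, (fun j => x j) j ^ 2) = σ₂ := by rw [hσ₂def]
  -- Chernoff upper tail
  set t₁ : ℝ := ε / (4 * σ₂) with ht₁def
  have ht₁pos : 0 ≤ t₁ := by positivity
  have ht₁σ : 2 * t₁ * σ₂ = ε / 2 := by
    rw [ht₁def]; field_simp; ring
  have ht1 : 2 * t₁ * (∑ j, (fun j => x j) j ^ 2) < 1 := by
    rw [hσf, ht₁σ]; linarith
  have hmgf1 := mgf_S (k := k) (fun j => x j) ht1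
  have hint1 : Integrable (fun P => Real.exp (t₁ * S P)) (gaussMeasure k m) := hmgf1.1
  have hub := measure_ge_le_exp_mul_mgf (X := S) (μ := gaussMeasure k m)
    ((1+ε)^2 * σ₂ * k) ht₁pos hint1
  have hmgfv1 : mgf S (gaussMeasure k m) t₁ = ((Real.sqrt (1 - ε/2))⁻¹) ^ k := by
    have h := hmgf1.2
    rw [hσf, ht₁σ] at h
    exact h
  have bound1 : (gaussMeasure k m {P | (1+ε)^2 * σ₂ * k ≤ S P}).toReal
      ≤ Real.exp (-(ε^2/8) * k) := by
    refine le_trans hub ?_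
    rw [hmgfv1]
    have harg : -t₁ * ((1+ε)^2 * σ₂ * k) = (-(ε/4) * (1+ε)^2) * k := by
      rw [ht₁def]; field_simp
    rw [harg, mul_comm (-(ε/4) * (1+ε)^2) (k:ℝ), Real.exp_nat_mul, ← mul_pow]
    calc (Real.exp (-(ε/4) * (1+ε)^2) * (Real.sqrt (1 - ε/2))⁻¹) ^ k
        ≤ (Real.exp (-(ε^2/8))) ^ k :=
          pow_le_pow_left₀ (by positivity) (num_upper h0 h1) k
      _ = Real.exp (-(ε^2/8) * k) := by
          rw [← Real.exp_nat_mul, mul_comm]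
  -- Chernoff lower tail
  set t₂ : ℝ := -(ε / (4 * σ₂)) with ht₂def
  have ht₂neg : t₂ ≤ 0 := by
    rw [ht₂def]
    simp only [neg_nonpos]
    positivity
  have ht₂σ : 2 * t₂ * σ₂ = -(ε / 2) := by
    rw [ht₂def]; field_simp; ring
  have ht2 : 2 * t₂ * (∑ j, (fun j => x j) j ^ 2) < 1 := by
    rw [hσf, ht₂σ]; linarith
  have hmgf2 := mgf_S (k := k) (fun j => x j) ht2
  have hint2 : Integrable (fun P => Real.exp (t₂ * S P)) (gaussMeasure k m) := hmgf2.1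
  have hlb := measure_le_le_exp_mul_mgf (X := S) (μ := gaussMeasure k m)
    ((1-ε)^2 * σ₂ * k) ht₂neg hint2
  have hmgfv2 : mgf S (gaussMeasure k m) t₂ = ((Real.sqrt (1 + ε/2))⁻¹) ^ k := by
    have h := hmgf2.2
    rw [hσf, ht₂σ] at h
    rw [show (1 : ℝ) - -(ε/2) = 1 + ε/2 by ring] at h
    exact h
  have bound2 : (gaussMeasure k m {P | S P ≤ (1-ε)^2 * σ₂ * k}).toReal
      ≤ Real.exp (-(ε^2/8) * k) := by
    refine le_trans hlb ?_
    rw [hmgfv2]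
    have harg : -t₂ * ((1-ε)^2 * σ₂ * k) = ((ε/4) * (1-ε)^2) * k := by
      rw [ht₂def]; field_simp
    rw [harg, mul_comm ((ε/4) * (1-ε)^2) (k:ℝ), Real.exp_nat_mul, ← mul_pow]
    calc (Real.exp ((ε/4) * (1-ε)^2) * (Real.sqrt (1 + ε/2))⁻¹) ^ k
        ≤ (Real.exp (-(ε^2/8))) ^ k :=
          pow_le_pow_left₀ (by positivity) (num_lower h0 h1) k
      _ = Real.exp (-(ε^2/8) * k) := by
          rw [← Real.exp_nat_mul, mul_comm]
  -- union bound
  have hEmeas : MeasurableSet {P : Fin k → Fin m → ℝ |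
      (1 - ε) * ‖x‖ ≤ ‖TP P x‖ ∧ ‖TP P x‖ ≤ (1 + ε) * ‖x‖} := by
    rw [hset]
    exact (hSmeas measurableSet_Ici).inter (hSmeas measurableSet_Iic)
  have hcompl : {P : Fin k → Fin m → ℝ |
      (1 - ε) * ‖x‖ ≤ ‖TP P x‖ ∧ ‖TP P x‖ ≤ (1 + ε) * ‖x‖}ᶜ
      ⊆ {P : Fin k → Fin m → ℝ | S P ≤ (1-ε)^2 * σ₂ * k}
        ∪ {P : Fin k → Fin m → ℝ | (1+ε)^2 * σ₂ * k ≤ S P} := by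
    rw [hset]
    intro P hP
    simp only [Set.mem_compl_iff, Set.mem_inter_iff, Set.mem_setOf_eq, not_and_or] at hP
    rcases hP with h | h
    · exact Or.inl (le_of_not_ge h)
    · exact Or.inr (le_of_not_ge h)
  have hone : ∀ c : Set (Fin k → Fin m → ℝ), gaussMeasure k m c ≠ ⊤ :=
    fun c => measure_ne_top _ c
  have hle : gaussMeasure k m ({P : Fin k → Fin m → ℝ |
      (1 - ε) * ‖x‖ ≤ ‖TP P x‖ ∧ ‖TP P x‖ ≤ (1 + ε) * ‖x‖}ᶜ)
      ≤ ENNReal.ofReal (2 * Real.exp (-(1/8) * ε^2 * k)) := by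
    refine le_trans (le_trans (measure_mono hcompl) (measure_union_le _ _)) ?_
    have hA : gaussMeasure k m {P : Fin k → Fin m → ℝ | S P ≤ (1-ε)^2 * σ₂ * k}
        ≤ ENNReal.ofReal (Real.exp (-(ε^2/8) * k)) := by
      rw [← ENNReal.ofReal_toReal (hone _)]
      exact ENNReal.ofReal_le_ofReal bound2
    have hB : gaussMeasure k m {P : Fin k → Fin m → ℝ | (1+ε)^2 * σ₂ * k ≤ S P}
        ≤ ENNReal.ofReal (Real.exp (-(ε^2/8) * k)) := by
      rw [← ENNReal.ofReal_toReal (hone _)]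
      exact ENNReal.ofReal_le_ofReal bound1
    refine le_trans (add_le_add hA hB) ?_
    rw [← ENNReal.ofReal_add (Real.exp_nonneg _) (Real.exp_nonneg _)]
    refine ENNReal.ofReal_le_ofReal (le_of_eq ?_)
    rw [show -(ε^2/8) * (k:ℝ) = -(1/8) * ε^2 * k by ring]
    ring
  have huniv := measure_add_measure_compl (μ := gaussMeasure k m) hEmeas
  rw [measure_univ] at huniv
  by_cases hneg : 1 - 2 * Real.exp (-(1/8) * ε^2 * (k:ℝ)) ≤ 0
  · rw [ENNReal.ofReal_eq_zero.mpr hneg]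
    exact zero_le
  · push_neg at hneg
    have hsum : ENNReal.ofReal (1 - 2 * Real.exp (-(1/8) * ε^2 * (k:ℝ)))
        + gaussMeasure k m ({P : Fin k → Fin m → ℝ |
          (1 - ε) * ‖x‖ ≤ ‖TP P x‖ ∧ ‖TP P x‖ ≤ (1 + ε) * ‖x‖}ᶜ)
        ≤ gaussMeasure k m {P : Fin k → Fin m → ℝ |
          (1 - ε) * ‖x‖ ≤ ‖TP P x‖ ∧ ‖TP P x‖ ≤ (1 + ε) * ‖x‖}
        + gaussMeasure k m ({P : Fin k → Fin m → ℝ |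
          (1 - ε) * ‖x‖ ≤ ‖TP P x‖ ∧ ‖TP P x‖ ≤ (1 + ε) * ‖x‖}ᶜ) := by
      rw [huniv]
      calc ENNReal.ofReal (1 - 2 * Real.exp (-(1/8) * ε^2 * (k:ℝ))) + _
          ≤ ENNReal.ofReal (1 - 2 * Real.exp (-(1/8) * ε^2 * (k:ℝ)))
            + ENNReal.ofReal (2 * Real.exp (-(1/8) * ε^2 * (k:ℝ))) := add_le_add le_rfl hle
        _ = ENNReal.ofReal 1 := by
            rw [← ENNReal.ofReal_add (le_of_lt hneg) (by positivity)]
            norm_num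
        _ = 1 := ENNReal.ofReal_one
    exact (ENNReal.add_le_add_iff_right (hone _)).mp hsum
end

section
/- (Random projection lemma, Rademacher case) There exists a constant C > 0, independent of m, k and ε, such that for every m, k ∈ ℕ with k ≥ 1, every ε ∈ (0,1), and every vector x ∈ ℝ^m, the probability, with respect to the product measure on k×m matrices P in which each entry is independently +1 or −1 with probability 1/2 each, of the event {(1−ε)·‖x‖ ≤ ‖T_P(x)‖ ≤ (1+ε)·‖x‖} is at least 1 − 2·exp(−C·ε²·k), where T_P(x) = (1/√k)·P·x. -/
open MeasureTheory ProbabilityTheory ENNReal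

/-- The product Rademacher measure on `k × m` matrices: each entry is independently `+1`
or `-1`, each with probability `1/2`. -/
noncomputable def radMeasure (k m : ℕ) : Measure (Fin k → Fin m → ℝ) :=
  Measure.pi fun _ : Fin k => Measure.pi fun _ : Fin m =>
    (PMF.uniformOfFinset ({-1, 1} : Finset ℝ) (Finset.insert_nonempty _ _)).toMeasure

/-!
Write `k‖T_P x‖² = ∑ᵢ Yᵢ²`, where the rows of `P` make `Yᵢ = ∑ⱼ Pᵢⱼ xⱼ` independent Rademacher
sums. Expanding `(Y ± a)^(2n)` binomially shows, coordinate by coordinate, that the even moments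
of a Rademacher sum are dominated by those of a Gaussian of the same variance:
`E Y^(2n) ≤ (2n-1)!! ‖x‖^(2n)`. Summing the exponential series then gives
`E exp(tY²) ≤ exp(t‖x‖² + 8t²‖x‖⁴)` whenever `4|t|‖x‖² ≤ 1`, for `t` of either sign, and
Chernoff's bound with `t = ±ε/(16‖x‖²)` bounds each of the two tails of `∑ᵢ Yᵢ²` by
`exp(-ε²k/32)`.
-/

open Finset Nat

lemma sum_range_two_mul_add_one {M : Type*} [AddCommMonoid M] (f : ℕ → M) (n : ℕ) :
    ∑ p ∈ range (2 * n + 1), f p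
      = ∑ j ∈ range (n + 1), f (2 * j) + ∑ j ∈ range n, f (2 * j + 1) := by
  induction n with
  | zero => simp
  | succ n ih =>
    rw [show 2 * (n + 1) + 1 = 2 * n + 1 + 1 + 1 by ring, sum_range_succ, sum_range_succ, ih,
      sum_range_succ (fun j => f (2 * j)) (n + 1), sum_range_succ (fun j => f (2 * j + 1)) n,
      show 2 * (n + 1) = 2 * n + 1 + 1 by ring]
    abel

lemma add_pow_two_mul_add_sub_pow_two_mul {R : Type*} [CommRing R] (y a : R) (n : ℕ) :
    (y + a) ^ (2 * n) + (y - a) ^ (2 * n)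
      = 2 * ∑ j ∈ range (n + 1),
          ((2 * n).choose (2 * j) : R) * a ^ (2 * j) * y ^ (2 * (n - j)) := by
  have hsum : (y + a) ^ (2 * n) + (y - a) ^ (2 * n)
      = ∑ p ∈ range (2 * n + 1), (1 + (-1) ^ p) * (a ^ p * y ^ (2 * n - p) * (2 * n).choose p) := by
    rw [sub_eq_add_neg, add_comm y, add_comm y, add_pow, add_pow, ← sum_add_distrib]
    refine sum_congr rfl fun p _ => ?_
    rw [neg_pow]; ring
  have hodd : ∀ j ∈ range n, (1 + (-1 : R) ^ (2 * j + 1)) *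
      (a ^ (2 * j + 1) * y ^ (2 * n - (2 * j + 1)) * (2 * n).choose (2 * j + 1)) = 0 := by
    intro j _
    rw [pow_succ, pow_mul, neg_one_sq, one_pow]; ring
  rw [hsum, sum_range_two_mul_add_one, sum_eq_zero hodd, add_zero, mul_sum]
  refine sum_congr rfl fun j _ => ?_
  rw [show 2 * n - 2 * j = 2 * (n - j) by omega, pow_mul, neg_one_sq, one_pow]
  ring

/-- `(2n-1)!!`, the `2n`-th moment of a standard Gaussian. -/
noncomputable def gaussianMoment (n : ℕ) : ℝ := (2 * n)! / (2 ^ n * n !)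

lemma gaussianMoment_le (n : ℕ) : gaussianMoment n ≤ 2 ^ n * n ! := by
  have h := Nat.centralBinom_le_four_pow n
  rw [Nat.centralBinom_eq_two_mul_choose, ← Nat.cast_le (α := ℝ), Nat.cast_choose ℝ (by omega),
    show 2 * n - n = n by omega, div_le_iff₀ (by positivity)] at h
  rw [gaussianMoment, div_le_iff₀ (by positivity)]
  calc ((2 * n)! : ℝ) ≤ 4 ^ n * (n ! * n !) := by exact_mod_cast h
    _ = 2 ^ n * n ! * (2 ^ n * n !) := by rw [show (4 : ℝ) = 2 * 2 by norm_num, mul_pow]; ring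

lemma choose_mul_gaussianMoment_le {n j : ℕ} (h : j ≤ n) :
    ((2 * n).choose (2 * j) : ℝ) * gaussianMoment (n - j) ≤ gaussianMoment n * n.choose j := by
  rw [Nat.cast_choose ℝ h, Nat.cast_choose ℝ (by omega), gaussianMoment, gaussianMoment,
    show 2 * n - 2 * j = 2 * (n - j) by omega]
  have h2 : (2 : ℝ) ^ n = 2 ^ j * 2 ^ (n - j) := by rw [← pow_add, Nat.add_sub_cancel' h]
  have hj : (2 ^ j * j ! : ℝ) ≤ (2 * j)! := by
    exact_mod_cast Nat.two_pow_mul_factorial_le_factorial_two_mul j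
  calc ((2 * n)! : ℝ) / ((2 * j)! * (2 * (n - j))!) * ((2 * (n - j))! / (2 ^ (n - j) * (n - j)!))
      = (2 * n)! / ((2 * j)! * (2 ^ (n - j) * (n - j)!)) := by field_simp
    _ ≤ (2 * n)! / ((2 ^ j * j !) * (2 ^ (n - j) * (n - j)!)) := by gcongr
    _ = (2 * n)! / (2 ^ n * n !) * (n ! / (j ! * (n - j)!)) := by rw [h2]; field_simp

lemma sum_fun_bool_fin_succ {M : Type*} [AddCommMonoid M] {m : ℕ}
    (F : (Fin (m + 1) → Bool) → M) :
    ∑ b, F b = ∑ b : Fin m → Bool, (F (Fin.cons true b) + F (Fin.cons false b)) := by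
  rw [← Fintype.sum_equiv (Fin.consEquiv fun _ => Bool) _ _ fun _ => rfl, Fintype.sum_prod_type,
    Fintype.sum_bool, sum_add_distrib]
  rfl

def boolSign (b : Bool) : ℝ := if b then 1 else -1

def rademacherSum {m : ℕ} (x : Fin m → ℝ) (b : Fin m → Bool) : ℝ := ∑ j, boolSign (b j) * x j

lemma sum_rademacherSum_pow_succ {m : ℕ} (x : Fin (m + 1) → ℝ) (N : ℕ) :
    ∑ b, rademacherSum x b ^ N
      = ∑ b, ((rademacherSum (Fin.tail x) b + x 0) ^ N
          + (rademacherSum (Fin.tail x) b - x 0) ^ N) := by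
  rw [sum_fun_bool_fin_succ]
  refine sum_congr rfl fun b _ => ?_
  simp only [rademacherSum, Fin.sum_univ_succ, Fin.cons_zero, Fin.cons_succ, boolSign, Fin.tail,
    if_true, Bool.false_eq_true, if_false]
  ring

lemma sum_rademacherSum_sq {m : ℕ} (x : Fin m → ℝ) :
    ∑ b, rademacherSum x b ^ 2 = 2 ^ m * ∑ j, x j ^ 2 := by
  induction m with
  | zero => simp [rademacherSum]
  | succ m ih =>
    have hexp (y : ℝ) : (y + x 0) ^ 2 + (y - x 0) ^ 2 = 2 * y ^ 2 + 2 * x 0 ^ 2 := by ring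
    simp only [sum_rademacherSum_pow_succ, hexp, sum_add_distrib, ← mul_sum, ih, sum_const,
      Fin.sum_univ_succ, Fin.tail, Finset.card_univ, Fintype.card_pi, Fintype.card_bool, prod_const,
      Fintype.card_fin, nsmul_eq_mul, cast_pow, cast_ofNat]
    ring

lemma sum_rademacherSum_pow_le {m : ℕ} (x : Fin m → ℝ) (n : ℕ) :
    ∑ b, rademacherSum x b ^ (2 * n) ≤ 2 ^ m * gaussianMoment n * (∑ j, x j ^ 2) ^ n := by
  induction m generalizing n with
  | zero => cases n <;> simp [rademacherSum, gaussianMoment]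
  | succ m ih =>
    set s := ∑ j, Fin.tail x j ^ 2
    have hs : 0 ≤ s := by positivity
    calc ∑ b, rademacherSum x b ^ (2 * n)
        = 2 * ∑ j ∈ range (n + 1), ((2 * n).choose (2 * j) : ℝ) * (x 0 ^ 2) ^ j *
            ∑ b, rademacherSum (Fin.tail x) b ^ (2 * (n - j)) := by
          simp only [sum_rademacherSum_pow_succ, add_pow_two_mul_add_sub_pow_two_mul, ← mul_sum]
          rw [sum_comm]
          simp only [mul_sum, pow_mul]
      _ ≤ 2 * ∑ j ∈ range (n + 1), ((2 * n).choose (2 * j) : ℝ) * (x 0 ^ 2) ^ j *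
            (2 ^ m * gaussianMoment (n - j) * s ^ (n - j)) := by
          gcongr with j; exact ih _ _
      _ ≤ 2 * ∑ j ∈ range (n + 1),
            2 ^ m * gaussianMoment n * ((x 0 ^ 2) ^ j * s ^ (n - j) * n.choose j) := by
          refine mul_le_mul_of_nonneg_left (sum_le_sum fun j hj => ?_) zero_le_two
          have := choose_mul_gaussianMoment_le (Nat.lt_succ_iff.mp (mem_range.mp hj))
          calc _ = (x 0 ^ 2) ^ j * s ^ (n - j) * 2 ^ m *
                (((2 * n).choose (2 * j) : ℝ) * gaussianMoment (n - j)) := by ring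
            _ ≤ (x 0 ^ 2) ^ j * s ^ (n - j) * 2 ^ m * (gaussianMoment n * n.choose j) := by gcongr
            _ = _ := by ring
      _ = 2 ^ (m + 1) * gaussianMoment n * (∑ j, x j ^ 2) ^ n := by
          rw [← mul_sum, ← add_pow, Fin.sum_univ_succ, pow_succ]
          simp only [s, Fin.tail]
          ring

lemma sum_mul_rademacherSum_sq_pow_div_factorial_le {m : ℕ} (x : Fin m → ℝ) (t : ℝ) (n : ℕ) :
    ∑ b, (t * rademacherSum x b ^ 2) ^ n / (n ! : ℝ) ≤ 2 ^ m * (2 * |t| * ∑ j, x j ^ 2) ^ n := by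
  have hmom : ∑ b, rademacherSum x b ^ (2 * n) ≤ 2 ^ m * (2 ^ n * n !) * (∑ j, x j ^ 2) ^ n :=
    (sum_rademacherSum_pow_le x n).trans (by gcongr; exact gaussianMoment_le n)
  have hM : 0 ≤ ∑ b, rademacherSum x b ^ (2 * n) :=
    sum_nonneg fun b _ => (even_two_mul n).pow_nonneg _
  calc ∑ b, (t * rademacherSum x b ^ 2) ^ n / (n ! : ℝ)
      = t ^ n / n ! * ∑ b, rademacherSum x b ^ (2 * n) := by
        rw [mul_sum]; refine sum_congr rfl fun b _ => ?_; rw [mul_pow, pow_mul]; ring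
    _ ≤ |t| ^ n / n ! * (2 ^ m * (2 ^ n * n !) * (∑ j, x j ^ 2) ^ n) := by
        gcongr ?_ / _ * ?_
        exact (le_abs_self _).trans_eq (abs_pow t n)
    _ = 2 ^ m * (2 * |t| * ∑ j, x j ^ 2) ^ n := by field_simp; ring

lemma sum_exp_mul_rademacherSum_sq_le {m : ℕ} (x : Fin m → ℝ) {t : ℝ}
    (ht : 4 * |t| * ∑ j, x j ^ 2 ≤ 1) :
    ∑ b, Real.exp (t * rademacherSum x b ^ 2)
      ≤ 2 ^ m * Real.exp (t * ∑ j, x j ^ 2 + 8 * t ^ 2 * (∑ j, x j ^ 2) ^ 2) := by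
  set σ2 := ∑ j, x j ^ 2
  set q := 2 * |t| * σ2 with hq_def
  have hq0 : 0 ≤ q := by positivity
  have hq : q ≤ 1 / 2 := by linarith
  set a : ℕ → ℝ := fun n => ∑ b, (t * rademacherSum x b ^ 2) ^ n / (n ! : ℝ)
  have ha : HasSum a (∑ b, Real.exp (t * rademacherSum x b ^ 2)) :=
    hasSum_sum fun b _ => Real.exp_eq_exp_ℝ ▸ NormedSpace.expSeries_div_hasSum_exp _
  have ha1 : a 1 = 2 ^ m * (t * σ2) := by
    simp only [a, pow_one, factorial_one, cast_one, div_one, ← mul_sum, sum_rademacherSum_sq]; ring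
  -- the terms of order `≥ 2` are dominated by a geometric series of ratio `q ≤ 1/2`
  have hgeom : HasSum (fun n => 2 ^ m * q ^ (n + 2)) (2 ^ m * (q ^ 2 * (1 - q)⁻¹)) := by
    simp_rw [pow_add, mul_comm _ (q ^ 2)]
    exact ((hasSum_geometric_of_lt_one hq0 (by linarith)).mul_left _).mul_left _
  have htail : ∑' n, a (n + 2) ≤ 2 ^ m * (q ^ 2 * 2) := by
    calc ∑' n, a (n + 2) ≤ 2 ^ m * (q ^ 2 * (1 - q)⁻¹) :=
          hasSum_le (fun n => sum_mul_rademacherSum_sq_pow_div_factorial_le x t _)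
            ((summable_nat_add_iff 2).mpr ha.summable).hasSum hgeom
      _ ≤ 2 ^ m * (q ^ 2 * 2) := by
          gcongr
          rw [inv_le_iff_one_le_mul₀ (by linarith)]; linarith
  calc ∑ b, Real.exp (t * rademacherSum x b ^ 2)
      = a 0 + a 1 + ∑' n, a (n + 2) := by
        rw [← ha.tsum_eq, ← ha.summable.sum_add_tsum_nat_add 2, sum_range_succ, sum_range_one]
    _ ≤ 2 ^ m + 2 ^ m * (t * σ2) + 2 ^ m * (q ^ 2 * 2) := by
        gcongr
        · simp [a]
        · exact ha1.le
    _ = 2 ^ m * (t * σ2 + 8 * t ^ 2 * σ2 ^ 2 + 1) := by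
        rw [hq_def, mul_pow, mul_pow, sq_abs]; ring
    _ ≤ 2 ^ m * Real.exp (t * σ2 + 8 * t ^ 2 * σ2 ^ 2) := by
        gcongr; exact Real.add_one_le_exp _

lemma card_le_exp_neg_mul_sum_exp {γ : Type*} [Fintype γ] (f : γ → ℝ) (c : ℝ) :
    (#{y | c ≤ f y} : ℝ) ≤ Real.exp (-c) * ∑ y, Real.exp (f y) := by
  calc (#{y | c ≤ f y} : ℝ) = Real.exp (-c) * (#{y | c ≤ f y} • Real.exp c) := by
        rw [nsmul_eq_mul, mul_left_comm, ← Real.exp_add, neg_add_cancel, Real.exp_zero, mul_one]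
    _ ≤ Real.exp (-c) * ∑ y ∈ ({y | c ≤ f y} : Finset γ), Real.exp (f y) := by
        gcongr
        exact card_nsmul_le_sum _ _ _ fun y hy => Real.exp_le_exp.2 (mem_filter.1 hy).2
    _ ≤ Real.exp (-c) * ∑ y, Real.exp (f y) := by
        gcongr
        exact subset_univ _

/- With `δ = ε` the event is the upper tail `(1 + ε) ‖x‖² k ≤ ∑ᵢ Yᵢ²`, with `δ = -ε` the lower
tail `∑ᵢ Yᵢ² ≤ (1 - ε) ‖x‖² k`. -/
lemma card_rademacher_tail_le {m : ℕ} (k : ℕ) (x : Fin m → ℝ) (hx : 0 < ∑ j, x j ^ 2) {δ : ℝ}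
    (hδ : |δ| ≤ 4) :
    (#{B : Fin k → Fin m → Bool |
        δ * (1 + δ) * (∑ j, x j ^ 2) * k ≤ δ * ∑ i, rademacherSum x (B i) ^ 2} : ℝ)
      ≤ 2 ^ (m * k) * Real.exp (-(δ ^ 2 * k / 32)) := by
  set σ2 := ∑ j, x j ^ 2
  set t := δ / (16 * σ2)
  have ht : 4 * |t| * σ2 ≤ 1 := by
    rw [abs_div, abs_of_pos (by positivity : 0 < 16 * σ2)]
    field_simp
    linarith
  have hfilter (B : Fin k → Fin m → Bool) :
      δ * (1 + δ) * σ2 * k ≤ δ * ∑ i, rademacherSum x (B i) ^ 2 ↔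
        t * (1 + δ) * σ2 * k ≤ ∑ i, t * rademacherSum x (B i) ^ 2 := by
    rw [← mul_sum]
    simp only [t, div_mul_eq_mul_div, div_le_div_iff_of_pos_right (by positivity : 0 < 16 * σ2)]
  have hfactor : ∑ B : Fin k → Fin m → Bool, Real.exp (∑ i, t * rademacherSum x (B i) ^ 2)
      = (∑ b, Real.exp (t * rademacherSum x b ^ 2)) ^ k := by
    simp only [Real.exp_sum, Fintype.sum_pow]
  rw [filter_congr fun B _ => hfilter B]
  calc _ ≤ Real.exp (-(t * (1 + δ) * σ2 * k)) * (∑ b, Real.exp (t * rademacherSum x b ^ 2)) ^ k :=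
        hfactor ▸ card_le_exp_neg_mul_sum_exp _ _
    _ ≤ Real.exp (-(t * (1 + δ) * σ2 * k)) *
          (2 ^ m * Real.exp (t * σ2 + 8 * t ^ 2 * σ2 ^ 2)) ^ k := by
        gcongr
        exact sum_exp_mul_rademacherSum_sq_le x ht
    _ = 2 ^ (m * k) * Real.exp (-(δ ^ 2 * k / 32)) := by
        rw [mul_pow, ← Real.exp_nat_mul, pow_mul, mul_left_comm, ← Real.exp_add]
        congr 2
        simp only [t]
        field_simp
        ring

lemma MeasureTheory.Measure.pi_eq_smul_sum_dirac {ι α β : Type*} [Fintype ι] [DecidableEq ι]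
    [MeasurableSpace α] [Fintype β] (μ : Measure α) [SigmaFinite μ] (g : β → α) (c : ℝ≥0∞)
    (hμ : μ = c • ∑ v, Measure.dirac (g v)) :
    Measure.pi (fun _ : ι => μ) = c ^ Fintype.card ι • ∑ f : ι → β, Measure.dirac (g ∘ f) := by
  refine Measure.pi_eq fun s hs => ?_
  simp only [hμ, Measure.smul_apply, Measure.coe_finsetSum, Finset.sum_apply,
    Measure.dirac_apply' _ (hs _), Measure.dirac_apply' _ (MeasurableSet.univ_pi hs), smul_eq_mul,
    prod_mul_distrib, prod_const, Fintype.prod_sum]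
  congr 1
  refine Finset.sum_congr rfl fun f _ => ?_
  rw [← coe_univ, Set.indicator_pi_one_apply]
  rfl

lemma uniformOfFinset_neg_one_one_toMeasure :
    (PMF.uniformOfFinset ({-1, 1} : Finset ℝ) (insert_nonempty _ _)).toMeasure
      = (2 : ℝ≥0∞)⁻¹ • ∑ b : Bool, Measure.dirac (boolSign b) := by
  ext s hs
  classical
  rw [PMF.toMeasure_uniformOfFinset_apply _ _ hs, Fintype.sum_bool]
  simp only [Measure.smul_apply, Measure.add_apply, Measure.dirac_apply' _ hs, boolSign, if_true,
    Bool.false_eq_true, if_false]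
  have hcard : #({-1, 1} : Finset ℝ) = 2 := card_pair (by norm_num)
  by_cases h1 : (1 : ℝ) ∈ s <;> by_cases h2 : (-1 : ℝ) ∈ s <;>
    simp [h1, h2, hcard, filter_insert, filter_singleton, one_add_one_eq_two, ENNReal.div_self,
      ENNReal.inv_mul_cancel]

def signMatrix {k m : ℕ} (B : Fin k → Fin m → Bool) : Fin k → Fin m → ℝ :=
  fun i j => boolSign (B i j)

lemma radMeasure_eq (k m : ℕ) :
    radMeasure k m
      = ((2 : ℝ≥0∞)⁻¹ ^ m) ^ k • ∑ B : Fin k → Fin m → Bool, Measure.dirac (signMatrix B) := by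
  have hrow := Measure.pi_eq_smul_sum_dirac (ι := Fin m) _ _ _
    uniformOfFinset_neg_one_one_toMeasure
  rw [Fintype.card_fin] at hrow
  rw [radMeasure, Measure.pi_eq_smul_sum_dirac (ι := Fin k) _ _ _ hrow, Fintype.card_fin]
  rfl

lemma radMeasure_apply (k m : ℕ) (A : Set (Fin k → Fin m → ℝ)) [∀ P, Decidable (P ∈ A)] :
    radMeasure k m A = ENNReal.ofReal (#{B | signMatrix B ∈ A} / 2 ^ (m * k)) := by
  rw [radMeasure_eq]
  simp only [Measure.smul_apply, Measure.coe_finsetSum, Finset.sum_apply, Measure.dirac_apply,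
    Set.indicator_apply, Pi.one_apply, sum_boole, smul_eq_mul]
  rw [ENNReal.ofReal_div_of_pos (by positivity), ENNReal.ofReal_natCast,
    ENNReal.ofReal_pow zero_le_two, ENNReal.ofReal_ofNat, ← pow_mul, ← ENNReal.inv_pow,
    ENNReal.div_eq_inv_mul]

lemma norm_TP_sq {k m : ℕ} (P : Fin k → Fin m → ℝ) (x : EuclideanSpace ℝ (Fin m)) :
    ‖TP P x‖ ^ 2 = (∑ i, (∑ j, P i j * x j) ^ 2) / k := by
  rw [TP, norm_smul, mul_pow, EuclideanSpace.real_norm_sq_eq, Real.norm_eq_abs, sq_abs, inv_pow,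
    Real.sq_sqrt k.cast_nonneg, inv_mul_eq_div]
  rfl

lemma radMeasure_tail_le {k m : ℕ} (hk : 0 < k) {x : EuclideanSpace ℝ (Fin m)} (hx : x ≠ 0)
    {δ : ℝ} (hδ : |δ| ≤ 4) :
    radMeasure k m {P | δ * (1 + δ) * ‖x‖ ^ 2 ≤ δ * ‖TP P x‖ ^ 2}
      ≤ ENNReal.ofReal (Real.exp (-(δ ^ 2 * k / 32))) := by
  have hσ : 0 < ∑ j, x j ^ 2 := by
    rw [← EuclideanSpace.real_norm_sq_eq]; exact pow_pos (norm_pos_iff.2 hx) 2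
  rw [radMeasure_apply]
  refine ENNReal.ofReal_le_ofReal ?_
  rw [div_le_iff₀ (by positivity), mul_comm (Real.exp _)]
  refine le_of_eq_of_le ?_ (card_rademacher_tail_le k x.ofLp hσ hδ)
  congr 2
  refine filter_congr fun B _ => ?_
  rw [Set.mem_ofPred_eq, norm_TP_sq, EuclideanSpace.real_norm_sq_eq, mul_div_assoc',
    le_div_iff₀ (by positivity)]
  rfl

lemma le_and_le_of_sq_bounds {a b ε : ℝ} (ha : 0 ≤ a) (hb : 0 ≤ b) (hε : ε ∈ Set.Icc (0 : ℝ) 1)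
    (hlow : (1 - ε) * b ^ 2 ≤ a ^ 2) (hupp : a ^ 2 ≤ (1 + ε) * b ^ 2) :
    (1 - ε) * b ≤ a ∧ a ≤ (1 + ε) * b := by
  obtain ⟨hε0, hε1⟩ := hε
  constructor
  · rw [← sq_le_sq₀ (by nlinarith) ha]; nlinarith
  · rw [← sq_le_sq₀ ha (by nlinarith)]; nlinarith

/-- **Random projection lemma (Rademacher case).**
There is a constant `C > 0`, independent of `m`, `k` and `ε`, such that for all `m`,
`k ≥ 1`, `ε ∈ (0,1)` and `x ∈ ℝ^m`, the Rademacher product measure of the set of matrices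
`P` with `(1-ε)·‖x‖ ≤ ‖T_P x‖ ≤ (1+ε)·‖x‖` is at least `1 - 2·exp(-C·ε²·k)`. -/
theorem random_projection_lemma_rademacher :
    ∃ C : ℝ, C > 0 ∧
      ∀ m k : ℕ, 1 ≤ k →
        ∀ ε : ℝ, ε ∈ Set.Ioo (0 : ℝ) 1 →
          ∀ x : EuclideanSpace ℝ (Fin m),
            radMeasure k m
                {P | (1 - ε) * ‖x‖ ≤ ‖TP P x‖ ∧ ‖TP P x‖ ≤ (1 + ε) * ‖x‖} ≥
              ENNReal.ofReal (1 - 2 * Real.exp (-C * ε ^ 2 * k)) := by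
  refine ⟨1 / 32, by norm_num, fun m k hk ε hε x => ?_⟩
  have : IsProbabilityMeasure (radMeasure k m) := by rw [radMeasure]; infer_instance
  set G := {P | (1 - ε) * ‖x‖ ≤ ‖TP P x‖ ∧ ‖TP P x‖ ≤ (1 + ε) * ‖x‖}
  set e := Real.exp (-(1 / 32) * ε ^ 2 * k)
  rcases eq_or_ne x 0 with rfl | hx
  · rw [show G = Set.univ from Set.eq_univ_of_forall fun P => by simp [G, TP], measure_univ]
    exact ENNReal.ofReal_le_one.2 (by linarith [Real.exp_pos (-(1 / 32) * ε ^ 2 * k)])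
  set bad := fun δ : ℝ => {P | δ * (1 + δ) * ‖x‖ ^ 2 ≤ δ * ‖TP P x‖ ^ 2}
  have hbad (δ : ℝ) (hδ : |δ| = ε) : radMeasure k m (bad δ) ≤ ENNReal.ofReal e := by
    convert radMeasure_tail_le hk hx (hδ.trans_le (by linarith [hε.2])) using 3
    rw [← hδ, sq_abs]; ring
  have hcompl : Gᶜ ⊆ bad ε ∪ bad (-ε) := by
    intro P hP
    by_contra hPbad
    simp only [Set.mem_union, not_or, bad, Set.mem_ofPred_eq, not_le] at hPbad
    exact hP (le_and_le_of_sq_bounds (norm_nonneg _) (norm_nonneg _) ⟨hε.1.le, hε.2.le⟩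
      (by nlinarith [hε.1]) (by nlinarith [hε.1]))
  have hGc : radMeasure k m Gᶜ ≤ ENNReal.ofReal e + ENNReal.ofReal e :=
    (measure_mono hcompl).trans <| (measure_union_le _ _).trans <|
      add_le_add (hbad ε (abs_of_pos hε.1)) (hbad (-ε) (by rw [abs_neg, abs_of_pos hε.1]))
  calc ENNReal.ofReal (1 - 2 * e) = 1 - (ENNReal.ofReal e + ENNReal.ofReal e) := by
        rw [ENNReal.ofReal_sub _ (by positivity), two_mul, ENNReal.ofReal_add (by positivity)
          (by positivity), ENNReal.ofReal_one]
    _ ≤ 1 - radMeasure k m Gᶜ := tsub_le_tsub_left hGc 1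
    _ ≤ radMeasure k m G := by
        rw [tsub_le_iff_right, ← measure_univ (μ := radMeasure k m)]
        exact measure_univ_le_add_compl G
end

section
/- (Union bound form of the Johnson–Lindenstrauss lemma) There exists a constant C > 0, independent of m, n, k and ε, such that for every ε ∈ (0,1), every m, k, n ∈ ℕ with k ≥ 1 and n ≥ 2, and every set of points a_1, …, a_n ∈ ℝ^m, the probability, with respect to the product Gaussian measure on k×m real matrices P (each entry i.i.d. standard normal N(0,1)), of the event {for all 1 ≤ i < j ≤ n: (1−ε)·‖a_i − a_j‖ ≤ ‖T_P(a_i) − T_P(a_j)‖ ≤ (1+ε)·‖a_i − a_j‖} is at least 1 − n·(n−1)·exp(−C·ε²·k), where T_P(x) = (1/√k)·P·x. -/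
/-!
For a unit vector `v`, the rows of `P` are independent standard Gaussian vectors in `ℝ^m`, so the
coordinates of `P v` are independent `N(0,1)` variables and `k ‖T_P v‖² = ‖P v‖²` is `χ²_k`. Its
Laplace transform is `E[exp (t ‖P v‖²)] = (1 - 2t)^(-k/2)` for `t < 1/2`, and Chernoff's bound
with `t = ε/8` for the upper tail and `t = -ε/4` for the lower tail gives
`P(‖T_P v‖ ∉ [1 - ε, 1 + ε]) ≤ 2 exp (-ε² k / 8)`. By linearity of `T_P` this applies to every
difference `a i - a j`, and a union bound over the `n (n - 1) / 2` pairs gives the claim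
with `C = 1/8`.
-/

open MeasureTheory ProbabilityTheory ENNReal

open scoped Matrix
open WithLp Real

lemma measure_le_exp_neg_mul_lintegral_exp {α : Type*} [MeasurableSpace α] {μ : Measure α}
    {g : α → ℝ} (hg : AEMeasurable g μ) (a : ℝ) :
    μ {x | a ≤ g x} ≤ ENNReal.ofReal (exp (-a)) * ∫⁻ x, ENNReal.ofReal (exp (g x)) ∂μ := by
  calc μ {x | a ≤ g x} ≤ μ {x | ENNReal.ofReal (exp a) ≤ ENNReal.ofReal (exp (g x))} :=
        measure_mono fun x hx => ENNReal.ofReal_le_ofReal (exp_le_exp.2 hx)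
    _ ≤ (∫⁻ x, ENNReal.ofReal (exp (g x)) ∂μ) / ENNReal.ofReal (exp a) :=
        meas_ge_le_lintegral_div (by fun_prop) (by simp [exp_pos]) ENNReal.ofReal_ne_top
    _ = ENNReal.ofReal (exp (-a)) * ∫⁻ x, ENNReal.ofReal (exp (g x)) ∂μ := by
        rw [ENNReal.div_eq_inv_mul, ← ENNReal.ofReal_inv_of_pos (exp_pos a), exp_neg]

lemma inv_sqrt_mul_exp_le {x b c : ℝ} (h : exp (2 * (b + c)) ≤ x) :
    (√x)⁻¹ * exp b ≤ exp (-c) := by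
  have hsqrt : exp (b + c) ≤ √x := by
    rw [le_sqrt (exp_pos _).le ((exp_pos _).le.trans h), ← exp_nat_mul]
    exact_mod_cast h
  calc (√x)⁻¹ * exp b ≤ (exp (b + c))⁻¹ * exp b := by gcongr
    _ = exp (-c) := by rw [← exp_neg, ← exp_add]; ring_nf

lemma lintegral_exp_mul_sq_gaussianReal {t : ℝ} (ht : 2 * t < 1) :
    ∫⁻ x, ENNReal.ofReal (exp (t * x ^ 2)) ∂gaussianReal 0 1 = ENNReal.ofReal (√(1 - 2 * t))⁻¹ := by
  have hb : 0 < (1 - 2 * t) / 2 := by linarith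
  have hdensity : ∀ x : ℝ, gaussianPDF 0 1 x * ENNReal.ofReal (exp (t * x ^ 2)) =
      ENNReal.ofReal ((√(2 * π))⁻¹ * exp (-((1 - 2 * t) / 2) * x ^ 2)) := by
    intro x
    rw [gaussianPDF, gaussianPDFReal, ← ENNReal.ofReal_mul (by positivity), mul_assoc,
      ← exp_add]
    norm_num
    ring_nf
  rw [gaussianReal_of_var_ne_zero _ one_ne_zero,
    lintegral_withDensity_eq_lintegral_mul _ (measurable_gaussianPDF 0 1) (by fun_prop)]
  simp only [Pi.mul_apply, hdensity]
  rw [← ofReal_integral_eq_lintegral_ofReal ((integrable_exp_neg_mul_sq hb).const_mul _)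
      (ae_of_all _ fun _ => by positivity), integral_const_mul, integral_gaussian,
    ← sqrt_inv, ← sqrt_inv, ← sqrt_mul (by positivity)]
  congr 2
  field_simp

lemma lintegral_exp_mul_sum_sq_pi_gaussianReal {ι : Type*} [Fintype ι] {t : ℝ} (ht : 2 * t < 1) :
    ∫⁻ y, ENNReal.ofReal (exp (t * ∑ i, y i ^ 2)) ∂Measure.pi (fun _ : ι => gaussianReal 0 1) =
      ENNReal.ofReal (√(1 - 2 * t))⁻¹ ^ Fintype.card ι := by
  have hprod : ∀ y : ι → ℝ, ENNReal.ofReal (exp (t * ∑ i, y i ^ 2)) =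
      ∏ i, ENNReal.ofReal (exp (t * y i ^ 2)) := by
    intro y
    rw [Finset.mul_sum, exp_sum, ENNReal.ofReal_prod_of_nonneg fun _ _ => (exp_pos _).le]
  have hindep : iIndepFun (fun i (y : ι → ℝ) => ENNReal.ofReal (exp (t * y i ^ 2)))
      (Measure.pi fun _ : ι => gaussianReal 0 1) :=
    iIndepFun_pi (X := fun _ x => ENNReal.ofReal (exp (t * x ^ 2))) fun _ => by fun_prop
  simp_rw [hprod]
  rw [lintegral_prod_eq_prod_lintegral_of_indepFun Finset.univ _ hindep fun _ => by fun_prop]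
  have hcoord : ∀ i, ∫⁻ y, ENNReal.ofReal (exp (t * y i ^ 2))
      ∂Measure.pi (fun _ : ι => gaussianReal 0 1) = ENNReal.ofReal (√(1 - 2 * t))⁻¹ := fun i => by
    rw [← lintegral_exp_mul_sq_gaussianReal ht,
      ← (measurePreserving_eval (fun _ : ι => gaussianReal 0 1) i).lintegral_comp (by fun_prop)]
  simp [hcoord]

/-- `E[exp (t X)] exp (-t a)` for `X ~ χ²_1`: the Chernoff bound on `{t X ≥ t a}`. -/
noncomputable def chiSqChernoffFactor (t a : ℝ) : ℝ := (√(1 - 2 * t))⁻¹ * exp (-(t * a))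

lemma pi_gaussianReal_chernoff {ι : Type*} [Fintype ι] {t : ℝ} (ht : 2 * t < 1) (a : ℝ) :
    Measure.pi (fun _ : ι => gaussianReal 0 1) {y | t * (a * Fintype.card ι) ≤ t * ∑ i, y i ^ 2}
      ≤ ENNReal.ofReal (chiSqChernoffFactor t a ^ Fintype.card ι) := by
  refine (measure_le_exp_neg_mul_lintegral_exp
    (Measurable.aemeasurable (by fun_prop)) _).trans_eq ?_
  rw [lintegral_exp_mul_sum_sq_pi_gaussianReal ht, ← ENNReal.ofReal_pow (by positivity),
    ← ENNReal.ofReal_mul (exp_pos _).le, chiSqChernoffFactor, mul_pow, ← exp_nat_mul]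
  ring_nf

lemma chiSqChernoffFactor_upper_le {ε : ℝ} (h0 : 0 < ε) (h1 : ε < 1) :
    chiSqChernoffFactor (ε / 8) ((1 + ε) ^ 2) ≤ exp (-(ε ^ 2 / 8)) := by
  refine inv_sqrt_mul_exp_le ?_
  set A := ε / 4 + ε ^ 2 / 4 + ε ^ 3 / 4
  have hA : 2 * (-(ε / 8 * (1 + ε) ^ 2) + ε ^ 2 / 8) = -A := by ring
  have hε : ε ^ 4 ≤ ε ^ 3 := pow_le_pow_of_le_one h0.le h1.le (by norm_num)
  calc exp (2 * (-(ε / 8 * (1 + ε) ^ 2) + ε ^ 2 / 8)) = (exp A)⁻¹ := by rw [hA, exp_neg]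
    _ ≤ (A + 1)⁻¹ := by gcongr; exact add_one_le_exp A
    _ ≤ 1 - 2 * (ε / 8) := by
        rw [inv_le_iff_one_le_mul₀ (by positivity)]
        nlinarith

lemma chiSqChernoffFactor_lower_le {ε : ℝ} (h0 : 0 < ε) (h1 : ε < 1) :
    chiSqChernoffFactor (-(ε / 4)) ((1 - ε) ^ 2) ≤ exp (-(ε ^ 2 / 8)) := by
  refine inv_sqrt_mul_exp_le ?_
  set y := ε / 2 * (1 - ε) ^ 2 + ε ^ 2 / 4
  have hy : 2 * (-(-(ε / 4) * (1 - ε) ^ 2) + ε ^ 2 / 8) = y := by ring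
  have hε : ε ^ 4 ≤ ε ^ 3 := pow_le_pow_of_le_one h0.le h1.le (by norm_num)
  have hy1 : y < 1 := by nlinarith
  calc exp (2 * (-(-(ε / 4) * (1 - ε) ^ 2) + ε ^ 2 / 8)) = exp y := by rw [hy]
    _ ≤ 1 / (1 - y) := exp_bound_div_one_sub_of_interval (by positivity) hy1
    _ ≤ 1 - 2 * -(ε / 4) := by
        rw [div_le_iff₀ (by linarith)]
        nlinarith

section ChiSquaredTails

variable {ι : Type*} [Fintype ι] {ε : ℝ}

lemma pi_gaussianReal_le_sum_sq_le (h0 : 0 < ε) (h1 : ε < 1) :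
    Measure.pi (fun _ : ι => gaussianReal 0 1) {y | (1 + ε) ^ 2 * Fintype.card ι ≤ ∑ i, y i ^ 2}
      ≤ ENNReal.ofReal (exp (-(ε ^ 2 / 8)) ^ Fintype.card ι) := by
  have hsub : {y : ι → ℝ | (1 + ε) ^ 2 * Fintype.card ι ≤ ∑ i, y i ^ 2} ⊆
      {y | ε / 8 * ((1 + ε) ^ 2 * Fintype.card ι) ≤ ε / 8 * ∑ i, y i ^ 2} :=
    fun _ hy => mul_le_mul_of_nonneg_left (α := ℝ) hy (by positivity)
  refine (measure_mono hsub).trans <| (pi_gaussianReal_chernoff (by linarith) _).trans <|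
    ENNReal.ofReal_le_ofReal ?_
  exact pow_le_pow_left₀ (by unfold chiSqChernoffFactor; positivity)
    (chiSqChernoffFactor_upper_le h0 h1) _

lemma pi_gaussianReal_sum_sq_le_le (h0 : 0 < ε) (h1 : ε < 1) :
    Measure.pi (fun _ : ι => gaussianReal 0 1) {y | ∑ i, y i ^ 2 ≤ (1 - ε) ^ 2 * Fintype.card ι}
      ≤ ENNReal.ofReal (exp (-(ε ^ 2 / 8)) ^ Fintype.card ι) := by
  have hsub : {y : ι → ℝ | ∑ i, y i ^ 2 ≤ (1 - ε) ^ 2 * Fintype.card ι} ⊆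
      {y | -(ε / 4) * ((1 - ε) ^ 2 * Fintype.card ι) ≤ -(ε / 4) * ∑ i, y i ^ 2} :=
    fun _ hy => mul_le_mul_of_nonpos_left (R := ℝ) hy (by linarith)
  refine (measure_mono hsub).trans <| (pi_gaussianReal_chernoff (by linarith) _).trans <|
    ENNReal.ofReal_le_ofReal ?_
  exact pow_le_pow_left₀ (by unfold chiSqChernoffFactor; positivity)
    (chiSqChernoffFactor_lower_le h0 h1) _

end ChiSquaredTails

lemma stdGaussian_map_innerSL {E : Type*} [NormedAddCommGroup E] [InnerProductSpace ℝ E]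
    [FiniteDimensional ℝ E] [MeasurableSpace E] [BorelSpace E] (v : E) :
    (stdGaussian E).map (innerSL ℝ v) = gaussianReal 0 (‖v‖₊ ^ 2) := by
  rw [IsGaussian.map_eq_gaussianReal, integral_strongDual_stdGaussian,
    variance_dual_stdGaussian, innerSL_apply_norm]
  congr
  ext
  simp

lemma pi_gaussianReal_map_dotProduct {κ : Type*} [Fintype κ] (v : EuclideanSpace ℝ κ) :
    (Measure.pi fun _ : κ => gaussianReal 0 1).map (fun x => x ⬝ᵥ ofLp v) =
      gaussianReal 0 (‖v‖₊ ^ 2) := by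
  have : (fun x : κ → ℝ => x ⬝ᵥ ofLp v) = innerSL ℝ v ∘ toLp 2 := by
    ext x
    simp [dotProduct, PiLp.inner_apply]
  rw [this, ← Measure.map_map (by fun_prop) (by fun_prop), map_pi_eq_stdGaussian,
    stdGaussian_map_innerSL]

lemma pi_pi_gaussianReal_map_mulVec {ι κ : Type*} [Fintype ι] [Fintype κ]
    {v : EuclideanSpace ℝ κ} (hv : ‖v‖ = 1) :
    (Measure.pi fun _ : ι => Measure.pi fun _ : κ => gaussianReal 0 1).map
        (fun P => Matrix.of P *ᵥ ofLp v) = Measure.pi fun _ : ι => gaussianReal 0 1 := by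
  have hv' : ‖v‖₊ ^ 2 = 1 := by ext; simp [hv]
  have h := Measure.pi_map_pi (μ := fun _ : ι => Measure.pi fun _ : κ => gaussianReal 0 1)
    (f := fun _ x => x ⬝ᵥ ofLp v) fun _ => by fun_prop
  rwa [pi_gaussianReal_map_dotProduct, hv'] at h

section RandomProjection

variable {k m : ℕ} {ε : ℝ}

lemma TP_apply (P : Fin k → Fin m → ℝ) (x : EuclideanSpace ℝ (Fin m)) :
    TP P x = (√k)⁻¹ • toLp 2 (Matrix.of P *ᵥ ofLp x) := rfl

lemma TP_sub (P : Fin k → Fin m → ℝ) (x y : EuclideanSpace ℝ (Fin m)) :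
    TP P x - TP P y = TP P (x - y) := by
  simp only [TP_apply, ofLp_sub, Matrix.mulVec_sub, toLp_sub, smul_sub]

lemma TP_smul (P : Fin k → Fin m → ℝ) (c : ℝ) (x : EuclideanSpace ℝ (Fin m)) :
    TP P (c • x) = c • TP P x := by
  simp only [TP_apply, ofLp_smul, Matrix.mulVec_smul, toLp_smul, smul_comm c]

-- Multiplied out by `k` so that it also holds for `k = 0`, where `(√0)⁻¹ = 0`.
lemma sq_norm_TP_mul (P : Fin k → Fin m → ℝ) (x : EuclideanSpace ℝ (Fin m)) :
    ‖TP P x‖ ^ 2 * k = ∑ i, (Matrix.of P *ᵥ ofLp x) i ^ 2 := by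
  rcases Nat.eq_zero_or_pos k with rfl | hk
  · simp
  rw [TP_apply, norm_smul, mul_pow, EuclideanSpace.real_norm_sq_eq, norm_inv,
    norm_of_nonneg (sqrt_nonneg _), inv_pow, sq_sqrt (Nat.cast_nonneg k)]
  field_simp

lemma gaussMeasure_preimage_mulVec {v : EuclideanSpace ℝ (Fin m)} (hv : ‖v‖ = 1)
    {s : Set (Fin k → ℝ)} (hs : MeasurableSet s) :
    gaussMeasure k m ((fun P => Matrix.of P *ᵥ ofLp v) ⁻¹' s) =
      Measure.pi (fun _ => gaussianReal 0 1) s := by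
  rw [← Measure.map_apply (Continuous.matrix_mulVec (by fun_prop) (by fun_prop)).measurable hs,
    gaussMeasure, pi_pi_gaussianReal_map_mulVec hv]

lemma gaussMeasure_norm_TP_lt_le {v : EuclideanSpace ℝ (Fin m)} (hv : ‖v‖ = 1)
    (h0 : 0 < ε) (h1 : ε < 1) :
    gaussMeasure k m {P | ‖TP P v‖ < 1 - ε} ≤ ENNReal.ofReal (exp (-(ε ^ 2 / 8)) ^ k) := by
  have hsub : {P : Fin k → Fin m → ℝ | ‖TP P v‖ < 1 - ε} ⊆
      (fun P => Matrix.of P *ᵥ ofLp v) ⁻¹' {y | ∑ i, y i ^ 2 ≤ (1 - ε) ^ 2 * k} := by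
    intro P (hP : ‖TP P v‖ < 1 - ε)
    rw [Set.mem_preimage, Set.mem_ofPred_eq, ← sq_norm_TP_mul]
    gcongr
  refine ((measure_mono hsub).trans_eq (gaussMeasure_preimage_mulVec hv
    (measurableSet_le (by fun_prop) (by fun_prop)))).trans ?_
  simpa using pi_gaussianReal_sum_sq_le_le (ι := Fin k) h0 h1

lemma gaussMeasure_lt_norm_TP_le {v : EuclideanSpace ℝ (Fin m)} (hv : ‖v‖ = 1)
    (h0 : 0 < ε) (h1 : ε < 1) :
    gaussMeasure k m {P | 1 + ε < ‖TP P v‖} ≤ ENNReal.ofReal (exp (-(ε ^ 2 / 8)) ^ k) := by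
  have hsub : {P : Fin k → Fin m → ℝ | 1 + ε < ‖TP P v‖} ⊆
      (fun P => Matrix.of P *ᵥ ofLp v) ⁻¹' {y | (1 + ε) ^ 2 * k ≤ ∑ i, y i ^ 2} := by
    intro P (hP : 1 + ε < ‖TP P v‖)
    rw [Set.mem_preimage, Set.mem_ofPred_eq, ← sq_norm_TP_mul]
    gcongr
  refine ((measure_mono hsub).trans_eq (gaussMeasure_preimage_mulVec hv
    (measurableSet_le (by fun_prop) (by fun_prop)))).trans ?_
  simpa using pi_gaussianReal_le_sum_sq_le (ι := Fin k) h0 h1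

lemma gaussMeasure_norm_TP_lt_mul_norm_le (w : EuclideanSpace ℝ (Fin m))
    (h0 : 0 < ε) (h1 : ε < 1) :
    gaussMeasure k m {P | ‖TP P w‖ < (1 - ε) * ‖w‖} ≤
      ENNReal.ofReal (exp (-(ε ^ 2 / 8)) ^ k) := by
  rcases eq_or_ne w 0 with rfl | hw
  · simp [(norm_nonneg _).not_gt]
  refine (measure_mono fun P (hP : ‖TP P w‖ < (1 - ε) * ‖w‖) => ?_).trans
    (gaussMeasure_norm_TP_lt_le (norm_smul_inv_norm (𝕜 := ℝ) hw) h0 h1)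
  change ‖TP P (‖w‖⁻¹ • w)‖ < 1 - ε
  rw [TP_smul, norm_smul, norm_inv, norm_norm, inv_mul_lt_iff₀ (norm_pos_iff.2 hw)]
  linarith

lemma gaussMeasure_mul_norm_lt_norm_TP_le (w : EuclideanSpace ℝ (Fin m))
    (h0 : 0 < ε) (h1 : ε < 1) :
    gaussMeasure k m {P | (1 + ε) * ‖w‖ < ‖TP P w‖} ≤
      ENNReal.ofReal (exp (-(ε ^ 2 / 8)) ^ k) := by
  rcases eq_or_ne w 0 with rfl | hw
  · simp [TP_apply]
  refine (measure_mono fun P (hP : (1 + ε) * ‖w‖ < ‖TP P w‖) => ?_).trans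
    (gaussMeasure_lt_norm_TP_le (norm_smul_inv_norm (𝕜 := ℝ) hw) h0 h1)
  change 1 + ε < ‖TP P (‖w‖⁻¹ • w)‖
  rw [TP_smul, norm_smul, norm_inv, norm_norm, lt_inv_mul_iff₀ (norm_pos_iff.2 hw)]
  linarith

end RandomProjection

lemma measure_iUnion_lt_union_le {α : Type*} [MeasurableSpace α] (μ : Measure α) {n : ℕ}
    (L U : Fin n → Fin n → Set α) {δ : ℝ≥0∞} (hL : ∀ i j, μ (L i j) ≤ δ)
    (hU : ∀ i j, μ (U i j) ≤ δ) :
    μ (⋃ j, ⋃ i ∈ Finset.Iio j, (L i j ∪ U i j)) ≤ (n * (n - 1) : ℕ) * δ := by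
  have hpair : ∀ i j, μ (L i j ∪ U i j) ≤ 2 * δ := fun i j =>
    (measure_union_le _ _).trans ((add_le_add (hL i j) (hU i j)).trans_eq (two_mul δ).symm)
  calc μ (⋃ j, ⋃ i ∈ Finset.Iio j, (L i j ∪ U i j))
      ≤ ∑ j, ∑ i ∈ Finset.Iio j, μ (L i j ∪ U i j) :=
        (measure_iUnion_fintype_le _ _).trans
          (Finset.sum_le_sum fun j _ => measure_biUnion_finset_le _ _)
    _ ≤ ∑ j : Fin n, (j : ℕ) * (2 * δ) := by
        gcongr with j
        exact (Finset.sum_le_card_nsmul _ _ _ fun i _ => hpair i j).trans_eq (by simp)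
    _ = (n * (n - 1) : ℕ) * δ := by
        rw [Fin.sum_univ_eq_sum_range (fun j => (j : ℝ≥0∞) * (2 * δ)), ← Finset.sum_mul,
          ← Finset.sum_range_id_mul_two]
        push_cast
        ring

lemma ofReal_one_sub_le_measure {α : Type*} [MeasurableSpace α] {μ : Measure α}
    [IsProbabilityMeasure μ] {s : Set α} {r : ℝ} (hr : 0 ≤ r) (h : μ sᶜ ≤ ENNReal.ofReal r) :
    ENNReal.ofReal (1 - r) ≤ μ s := by
  have hcover : 1 ≤ μ s + μ sᶜ := by
    rw [← measure_univ (μ := μ), ← Set.union_compl_self s]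
    exact measure_union_le _ _
  rw [ENNReal.ofReal_sub _ hr, ENNReal.ofReal_one]
  exact (tsub_le_tsub_left h 1).trans (tsub_le_iff_right.2 hcover)

instance (k m : ℕ) : IsProbabilityMeasure (gaussMeasure k m) := by
  rw [gaussMeasure]
  infer_instance

/-- **Union bound form of the Johnson–Lindenstrauss lemma.**
There is a constant `C > 0`, independent of `m`, `n`, `k` and `ε`, such that for all
`ε ∈ (0,1)`, `k ≥ 1`, `n ≥ 2` and points `a : Fin n → ℝ^m`, the Gaussian measure of the
set of matrices `P` such that for all `i < j`,
`(1-ε)·‖a i - a j‖ ≤ ‖T_P (a i) - T_P (a j)‖ ≤ (1+ε)·‖a i - a j‖`,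
is at least `1 - n·(n-1)·exp(-C·ε²·k)`. -/
theorem johnson_lindenstrauss_union_bound :
    ∃ C : ℝ, C > 0 ∧
      ∀ ε : ℝ, ε ∈ Set.Ioo (0 : ℝ) 1 →
        ∀ m k n : ℕ, 1 ≤ k → 2 ≤ n →
          ∀ a : Fin n → EuclideanSpace ℝ (Fin m),
            gaussMeasure k m
                {P | ∀ i j : Fin n, i < j →
                  (1 - ε) * ‖a i - a j‖ ≤ ‖TP P (a i) - TP P (a j)‖ ∧
                  ‖TP P (a i) - TP P (a j)‖ ≤ (1 + ε) * ‖a i - a j‖} ≥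
              ENNReal.ofReal (1 - n * (n - 1) * Real.exp (-C * ε ^ 2 * k)) := by
  refine ⟨1 / 8, by norm_num, ?_⟩
  rintro ε ⟨h0, h1⟩ m k n - hn a
  have hcompl : {P : Fin k → Fin m → ℝ | ∀ i j : Fin n, i < j →
      (1 - ε) * ‖a i - a j‖ ≤ ‖TP P (a i) - TP P (a j)‖ ∧
      ‖TP P (a i) - TP P (a j)‖ ≤ (1 + ε) * ‖a i - a j‖}ᶜ ⊆
      ⋃ j, ⋃ i ∈ Finset.Iio j, ({P | ‖TP P (a i - a j)‖ < (1 - ε) * ‖a i - a j‖} ∪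
        {P | (1 + ε) * ‖a i - a j‖ < ‖TP P (a i - a j)‖}) := by
    intro P hP
    simp only [Set.mem_compl_iff, Set.mem_ofPred_eq, not_forall, TP_sub] at hP
    obtain ⟨i, j, hij, hbad⟩ := hP
    simp only [Set.mem_iUnion, Finset.mem_Iio, Set.mem_union, Set.mem_ofPred_eq]
    refine ⟨j, i, hij, ?_⟩
    simpa only [not_and_or, not_le] using hbad
  have hn1 : (1 : ℝ) ≤ n := by exact_mod_cast (by omega : 1 ≤ n)
  refine ofReal_one_sub_le_measure (by positivity) <| (measure_mono hcompl).trans <|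
    (measure_iUnion_lt_union_le _ _ _
      (fun i j => gaussMeasure_norm_TP_lt_mul_norm_le (a i - a j) h0 h1)
      (fun i j => gaussMeasure_mul_norm_lt_norm_TP_le (a i - a j) h0 h1)).trans_eq ?_
  rw [← ENNReal.ofReal_natCast, ← ENNReal.ofReal_mul (Nat.cast_nonneg _), Nat.cast_mul,
    Nat.cast_pred (by omega), ← exp_nat_mul]
  ring_nf
end

section
/- (Membership lemma, finite restricted set) There exists a constant C > 0, independent of m, n and k, such that for every m, n, k ∈ ℕ with k ≥ 1, all vectors b, a_1, …, a_n ∈ ℝ^m, and every finite set X ⊆ ℝ^n such that b ≠ Σ_{i=1}^n y_i·a_i for all y ∈ X, the probability, with respect to the product Gaussian measure on k×m real matrices P (each entry i.i.d. standard normal N(0,1)), of the event {for all y ∈ X: T_P(b) ≠ Σ_{i=1}^n y_i·T_P(a_i)} is at least 1 − 2·|X|·exp(−C·k), where T_P(z) = (1/√k)·P·z and |X| denotes the cardinality of X. -/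
/-!
For each `y ∈ X`, the bad event `T_P b = Σ y_i T_P a_i` says that `P` kills the nonzero vector
`w = b - Σ y_i a_i`, so in particular the first row of `P` lies in the hyperplane `w^⊥`.
Hyperplanes are Lebesgue-null, and the Gaussian product measure is absolutely continuous with
respect to Lebesgue measure, so each bad event is null. A finite union of null events is null,
hence the good event has probability one and the bound holds with `C = 1`.
-/

open MeasureTheory ProbabilityTheory ENNReal

open Matrix

theorem MeasureTheory.Measure.AbsolutelyContinuous.pi_fin {N : ℕ} {α : Fin N → Type*}
    [∀ i, MeasurableSpace (α i)] {μ ν : ∀ i, Measure (α i)} [∀ i, SigmaFinite (μ i)]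
    [∀ i, SigmaFinite (ν i)] (h : ∀ i, μ i ≪ ν i) : Measure.pi μ ≪ Measure.pi ν := by
  induction N with
  | zero => rw [Measure.pi_of_empty μ, Measure.pi_of_empty ν]
  | succ n ih =>
    let e := MeasurableEquiv.piFinSuccAbove α 0
    have key : (Measure.pi μ).map e ≪ (Measure.pi ν).map e := by
      rw [(measurePreserving_piFinSuccAbove μ 0).map_eq,
        (measurePreserving_piFinSuccAbove ν 0).map_eq]
      exact (h 0).prod (ih fun i => h _)
    simpa only [MeasurableEquiv.map_symm_map] using key.map e.symm.measurable

theorem MeasureTheory.Measure.AbsolutelyContinuous.pi {ι : Type*} [Fintype ι] {α : ι → Type*}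
    [∀ i, MeasurableSpace (α i)] {μ ν : ∀ i, Measure (α i)} [∀ i, SigmaFinite (μ i)]
    [∀ i, SigmaFinite (ν i)] (h : ∀ i, μ i ≪ ν i) : Measure.pi μ ≪ Measure.pi ν := by
  let e := (Fintype.equivFin ι).symm
  rw [← (measurePreserving_piCongrLeft μ e).map_eq, ← (measurePreserving_piCongrLeft ν e).map_eq]
  exact (pi_fin fun i => h (e i)).map (MeasurableEquiv.piCongrLeft α e).measurable

theorem measure_pi_gaussianReal_submodule_eq_zero {ι : Type*} [Fintype ι] (μ : ℝ) {v : NNReal}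
    (hv : v ≠ 0) (s : Submodule ℝ (ι → ℝ)) (hs : s ≠ ⊤) :
    Measure.pi (fun _ => gaussianReal μ v) (s : Set (ι → ℝ)) = 0 :=
  Measure.AbsolutelyContinuous.pi (fun _ => gaussianReal_absolutelyContinuous μ hv)
    (Measure.addHaar_submodule volume s hs)

instance inst_s7 (k m : ℕ) : IsProbabilityMeasure (gaussMeasure k m) := by
  unfold gaussMeasure; infer_instance

theorem gaussMeasure_setOf_mulVec_eq_zero {k m : ℕ} (hk : k ≠ 0) {w : Fin m → ℝ} (hw : w ≠ 0) :
    gaussMeasure k m {P | of P *ᵥ w = 0} = 0 := by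
  let row : Fin k := ⟨0, Nat.pos_of_ne_zero hk⟩
  have hker : LinearMap.ker (dotProductEquiv ℝ (Fin m) w) ≠ ⊤ := by
    simpa [LinearMap.ker_eq_top] using hw
  refine measure_mono_null (fun P hP => ?_) (Measure.pi_eval_preimage_null (i := row) _
    (measure_pi_gaussianReal_submodule_eq_zero 0 one_ne_zero _ hker))
  simpa [mulVec, dotProduct_comm] using congrFun hP row

theorem TP_eq_toLpLin {k m : ℕ} (P : Fin k → Fin m → ℝ) :
    TP P = ⇑((Real.sqrt k)⁻¹ • toLpLin 2 2 (of P)) :=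
  rfl

theorem TP_sub_sum {k m n : ℕ} (P : Fin k → Fin m → ℝ) (b : EuclideanSpace ℝ (Fin m))
    (a : Fin n → EuclideanSpace ℝ (Fin m)) (y : Fin n → ℝ) :
    TP P b - ∑ i, y i • TP P (a i) = TP P (b - ∑ i, y i • a i) := by
  rw [TP_eq_toLpLin, map_sub, map_sum]
  simp only [map_smul]

theorem TP_eq_zero_iff {k m : ℕ} (hk : k ≠ 0) (P : Fin k → Fin m → ℝ)
    (x : EuclideanSpace ℝ (Fin m)) : TP P x = 0 ↔ of P *ᵥ x.ofLp = 0 := by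
  have : (Real.sqrt k)⁻¹ ≠ 0 := by positivity
  simp [TP_eq_toLpLin, this, toLpLin_apply]

theorem gaussMeasure_setOf_TP_eq_sum_eq_zero {k m n : ℕ} (hk : k ≠ 0)
    {b : EuclideanSpace ℝ (Fin m)} {a : Fin n → EuclideanSpace ℝ (Fin m)} {y : Fin n → ℝ}
    (hb : b ≠ ∑ i, y i • a i) :
    gaussMeasure k m {P | TP P b = ∑ i, y i • TP P (a i)} = 0 := by
  have hw : (b - ∑ i, y i • a i).ofLp ≠ 0 := by
    rwa [ne_eq, WithLp.ofLp_eq_zero, sub_eq_zero]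
  refine measure_mono_null (fun P hP => ?_) (gaussMeasure_setOf_mulVec_eq_zero hk hw)
  rwa [Set.mem_ofPred_eq, ← sub_eq_zero, TP_sub_sum, TP_eq_zero_iff hk] at hP

/-- **Membership lemma, finite restricted set.**
There is a constant `C > 0`, independent of `m`, `n` and `k`, such that for all `m`, `n`,
`k ≥ 1`, all `b, a_1, …, a_n ∈ ℝ^m` and every finite set `X ⊆ ℝ^n` with
`b ≠ Σ_i y_i · a_i` for all `y ∈ X`, the Gaussian measure of the set of matrices `P` such
that `T_P b ≠ Σ_i y_i · T_P (a_i)` for all `y ∈ X` is at least `1 - 2·|X|·exp(-C·k)`. -/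
theorem membership_lemma_finite :
    ∃ C : ℝ, C > 0 ∧
      ∀ m n k : ℕ, 1 ≤ k →
        ∀ (b : EuclideanSpace ℝ (Fin m)) (a : Fin n → EuclideanSpace ℝ (Fin m))
          (X : Finset (Fin n → ℝ)), (∀ y ∈ X, b ≠ ∑ i, y i • a i) →
          gaussMeasure k m {P | ∀ y ∈ X, TP P b ≠ ∑ i, y i • TP P (a i)} ≥
            ENNReal.ofReal (1 - 2 * X.card * Real.exp (-C * k)) := by
  refine ⟨1, one_pos, fun m n k hk b a X hX => ?_⟩
  have hbad : {P : Fin k → Fin m → ℝ | ∀ y ∈ X, TP P b ≠ ∑ i, y i • TP P (a i)}ᶜ =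
      ⋃ y ∈ X, {P | TP P b = ∑ i, y i • TP P (a i)} := by
    ext P; simp
  have hnull : gaussMeasure k m {P | ∀ y ∈ X, TP P b ≠ ∑ i, y i • TP P (a i)}ᶜ = 0 := by
    rw [hbad]
    exact (measure_biUnion_null_iff X.countable_toSet).2 fun y hy =>
      gaussMeasure_setOf_TP_eq_sum_eq_zero (by omega) (hX y hy)
  rw [ge_iff_le, measure_congr (ae_eq_univ.2 hnull), measure_univ, ENNReal.ofReal_le_one]
  exact sub_le_self _ (by positivity)
end

section
/- (Projection of a separating hyperplane, deterministic core) Let b, a_1, …, a_n ∈ ℝ^m be vectors of Euclidean norm 1, let ε > 0, and let c ∈ ℝ^m with ‖c‖ = 1 be such that ⟨c, b⟩ < −ε and ⟨c, a_i⟩ ≥ ε for all 1 ≤ i ≤ n. Let T : ℝ^m → ℝ^k be a linear map such that for every x ∈ {b, a_1, …, a_n}, both (1−ε)·‖c−x‖² ≤ ‖T(c−x)‖² ≤ (1+ε)·‖c−x‖² and (1−ε)·‖c+x‖² ≤ ‖T(c+x)‖² ≤ (1+ε)·‖c+x‖² hold. Then ⟨T(c), T(b)⟩ < 0 and ⟨T(c),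 T(a_i)⟩ ≥ 0 for all 1 ≤ i ≤ n; in particular, T(b) ∉ cone{T(a_1), …, T(a_n)}. -/
/-!
By polarization, `4 ⟪T x, T y⟫ = ‖T (x + y)‖² - ‖T (x - y)‖²`, so a linear map that distorts
the squared norms of `c ± x` by a factor at most `1 ± ε` moves `⟪c, x⟫` by at most `ε` when `c`
and `x` are unit vectors. The margin `ε` therefore preserves the signs of `⟪c, b⟫` and
`⟪c, a_i⟫`, and `T c` is the normal of a hyperplane separating `T b` from the cone.
-/

open RealInnerProductSpace

def coneOf {E : Type*} [AddCommMonoid E] [Module ℝ E] {n : ℕ} (v : Fin n → E) : Set E :=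
  {x | ∃ lam : Fin n → ℝ, (∀ i, 0 ≤ lam i) ∧ x = ∑ i, lam i • v i}

section AlmostIsometry

variable {E F : Type*} [NormedAddCommGroup E] [InnerProductSpace ℝ E]
  [NormedAddCommGroup F] [InnerProductSpace ℝ F]

def SqNormDistortionLE (T : E →ₗ[ℝ] F) (ε : ℝ) (v : E) : Prop :=
  (1 - ε) * ‖v‖ ^ 2 ≤ ‖T v‖ ^ 2 ∧ ‖T v‖ ^ 2 ≤ (1 + ε) * ‖v‖ ^ 2

theorem four_mul_inner_eq_norm_add_sq_sub_norm_sub_sq (x y : E) :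
    4 * ⟪x, y⟫ = ‖x + y‖ ^ 2 - ‖x - y‖ ^ 2 := by
  rw [norm_add_sq_real, norm_sub_sq_real]
  ring

theorem abs_inner_map_sub_inner_le {T : E →ₗ[ℝ] F} {ε : ℝ} {x y : E}
    (hsub : SqNormDistortionLE T ε (x - y)) (hadd : SqNormDistortionLE T ε (x + y)) :
    |⟪T x, T y⟫ - ⟪x, y⟫| ≤ ε * (‖x‖ ^ 2 + ‖y‖ ^ 2) / 2 := by
  have hpolT := four_mul_inner_eq_norm_add_sq_sub_norm_sub_sq (T x) (T y)
  have hpol := four_mul_inner_eq_norm_add_sq_sub_norm_sub_sq x y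
  have hpar : ‖x + y‖ ^ 2 + ‖x - y‖ ^ 2 = 2 * (‖x‖ ^ 2 + ‖y‖ ^ 2) := by
    rw [norm_add_sq_real, norm_sub_sq_real]
    ring
  rw [← map_add, ← map_sub] at hpolT
  obtain ⟨hsub_lo, hsub_hi⟩ := hsub
  obtain ⟨hadd_lo, hadd_hi⟩ := hadd
  rw [abs_le]
  constructor
  · linear_combination (hadd_lo + hsub_hi - hpolT + hpol + ε * hpar) / 4
  · linear_combination (hadd_hi + hsub_lo + hpolT - hpol + ε * hpar) / 4

theorem abs_inner_map_sub_inner_le_of_norm_eq_one {T : E →ₗ[ℝ] F} {ε : ℝ} {x y : E}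
    (hsub : SqNormDistortionLE T ε (x - y)) (hadd : SqNormDistortionLE T ε (x + y))
    (hx : ‖x‖ = 1) (hy : ‖y‖ = 1) :
    |⟪T x, T y⟫ - ⟪x, y⟫| ≤ ε :=
  (abs_inner_map_sub_inner_le hsub hadd).trans_eq (by rw [hx, hy]; ring)

end AlmostIsometry

theorem notMem_coneOf_of_inner_neg {E : Type*} [NormedAddCommGroup E] [InnerProductSpace ℝ E]
    {n : ℕ} {v : Fin n → E} {w u : E} (hv : ∀ i, 0 ≤ ⟪w, v i⟫) (hu : ⟪w, u⟫ < 0) :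
    u ∉ coneOf v := by
  rintro ⟨lam, hlam, rfl⟩
  refine hu.not_ge ?_
  rw [inner_sum]
  exact Finset.sum_nonneg fun i _ => by
    rw [real_inner_smul_right]
    exact mul_nonneg (hlam i) (hv i)

theorem separating_hyperplane_deterministic_general {m k n : ℕ}
    (b c : EuclideanSpace ℝ (Fin m)) (a : Fin n → EuclideanSpace ℝ (Fin m))
    (hb : ‖b‖ = 1) (ha : ∀ i, ‖a i‖ = 1) (hc : ‖c‖ = 1)
    (ε : ℝ)
    (hcb : ⟪c, b⟫ < -ε) (hca : ∀ i, ε ≤ ⟪c, a i⟫)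
    (T : EuclideanSpace ℝ (Fin m) →ₗ[ℝ] EuclideanSpace ℝ (Fin k))
    (hT : ∀ x ∈ insert b (Set.range a),
      ((1 - ε) * ‖c - x‖ ^ 2 ≤ ‖T (c - x)‖ ^ 2 ∧ ‖T (c - x)‖ ^ 2 ≤ (1 + ε) * ‖c - x‖ ^ 2) ∧
      ((1 - ε) * ‖c + x‖ ^ 2 ≤ ‖T (c + x)‖ ^ 2 ∧ ‖T (c + x)‖ ^ 2 ≤ (1 + ε) * ‖c + x‖ ^ 2)) :
    (⟪T c, T b⟫ < 0 ∧ ∀ i, 0 ≤ ⟪T c, T (a i)⟫) ∧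
      T b ∉ coneOf (fun i => T (a i)) := by
  have hclose : ∀ x ∈ insert b (Set.range a), ‖x‖ = 1 → |⟪T c, T x⟫ - ⟪c, x⟫| ≤ ε :=
    fun x hx hx1 => abs_inner_map_sub_inner_le_of_norm_eq_one (hT x hx).1 (hT x hx).2 hc hx1
  have hTb : ⟪T c, T b⟫ < 0 := by
    linarith [(abs_le.1 (hclose b (Set.mem_insert _ _) hb)).2]
  have hTa : ∀ i, 0 ≤ ⟪T c, T (a i)⟫ := fun i => by
    linarith [hca i, (abs_le.1 (hclose (a i) (Set.mem_insert_of_mem _ ⟨i, rfl⟩) (ha i))).1]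
  exact ⟨⟨hTb, hTa⟩, notMem_coneOf_of_inner_neg hTa hTb⟩

/-- **Projection of a separating hyperplane, deterministic core.**
If `b, a_1, …, a_n, c ∈ ℝ^m` are unit vectors with `⟪c, b⟫ < -ε` and `⟪c, a_i⟫ ≥ ε`, and
`T` is a linear map preserving (up to factor `1 ± ε`) the squared norms of `c - x` and
`c + x` for every `x ∈ {b, a_1, …, a_n}`, then `⟪T c, T b⟫ < 0` and `⟪T c, T (a i)⟫ ≥ 0`
for all `i`; in particular `T b ∉ cone {T (a_1), …, T (a_n)}`. -/
theorem separating_hyperplane_deterministic {m k n : ℕ}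
    (b c : EuclideanSpace ℝ (Fin m)) (a : Fin n → EuclideanSpace ℝ (Fin m))
    (hb : ‖b‖ = 1) (ha : ∀ i, ‖a i‖ = 1) (hc : ‖c‖ = 1)
    (ε : ℝ) (hε : 0 < ε)
    (hcb : ⟪c, b⟫ < -ε) (hca : ∀ i, ε ≤ ⟪c, a i⟫)
    (T : EuclideanSpace ℝ (Fin m) →ₗ[ℝ] EuclideanSpace ℝ (Fin k))
    (hT : ∀ x ∈ insert b (Set.range a),
      ((1 - ε) * ‖c - x‖ ^ 2 ≤ ‖T (c - x)‖ ^ 2 ∧ ‖T (c - x)‖ ^ 2 ≤ (1 + ε) * ‖c - x‖ ^ 2) ∧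
      ((1 - ε) * ‖c + x‖ ^ 2 ≤ ‖T (c + x)‖ ^ 2 ∧ ‖T (c + x)‖ ^ 2 ≤ (1 + ε) * ‖c + x‖ ^ 2)) :
    (⟪T c, T b⟫ < 0 ∧ ∀ i, 0 ≤ ⟪T c, T (a i)⟫) ∧
      T b ∉ coneOf (fun i => T (a i)) :=
  separating_hyperplane_deterministic_general b c a hb ha hc ε hcb hca T hT
end

section
/- (Separation from a convex hull, deterministic core) Let a_1, …, a_n ∈ ℝ^m, let C = conv{a_1, …, a_n}, let b ∈ ℝ^m with b ∉ C, let d = min_{x ∈ C} ‖b − x‖ and D = max_{1 ≤ i ≤ n} ‖b − a_i‖, and let ε ∈ (0,1) with ε < d²/D². Let T : ℝ^m → ℝ^k be a linear map such that for all x, y ∈ {0, b − a_1, …, b − a_n}, both (1−ε)·‖x−y‖² ≤ ‖T(x−y)‖² ≤ (1+ε)·‖x−y‖² and (1−ε)·‖x+y‖² ≤ ‖T(x+y)‖² ≤ (1+ε)·‖x+y‖² hold. Then for all λ_1, …, λ_n ≥ 0 with Σ_{i=1}^n λ_i = 1 one has ‖T(b) − Σ_{i=1}^n λ_i·T(a_i)‖²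 ≥ d² − ε·D² > 0; in particular, T(b) ∉ conv{T(a_1), …, T(a_n)}. -/
/-- The convex hull of vectors `v_1, …, v_n`: all convex combinations. -/
def convOf {E : Type*} [AddCommMonoid E] [Module ℝ E] {n : ℕ} (v : Fin n → E) : Set E :=
  {x | ∃ lam : Fin n → ℝ, (∀ i, 0 ≤ lam i) ∧ (∑ i, lam i = 1) ∧ x = ∑ i, lam i • v i}

private lemma norm_sq_sum_smul {E : Type*} [NormedAddCommGroup E] [InnerProductSpace ℝ E]
    {n : ℕ} (lam : Fin n → ℝ) (u : Fin n → E) :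
    ‖∑ i, lam i • u i‖ ^ 2 = ∑ i, ∑ j, lam i * lam j * (inner ℝ (u i) (u j) : ℝ) := by
  rw [← real_inner_self_eq_norm_sq, sum_inner]
  refine Finset.sum_congr rfl fun i _ => ?_
  rw [real_inner_smul_left, inner_sum, Finset.mul_sum]
  refine Finset.sum_congr rfl fun j _ => ?_
  rw [real_inner_smul_right]; ring

/-- **Separation from a convex hull, deterministic core.**
Let `C = conv{a_1, …, a_n}`, `b ∉ C`, `d = min_{x ∈ C} ‖b - x‖`,
`D = max_i ‖b - a i‖` and `0 < ε < d²/D²` with `ε < 1`. If a linear map `T` distorts the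
squared norms of `x - y` and `x + y` by a factor of at most `1 ± ε` for all
`x, y ∈ {0, b - a_1, …, b - a_n}`, then for every convex combination,
`‖T b - Σ_i λ_i · T (a_i)‖² ≥ d² - ε·D² > 0`; in particular,
`T b ∉ conv{T (a_1), …, T (a_n)}`. -/
theorem convex_hull_separation_deterministic {m k n : ℕ}
    (a : Fin n → EuclideanSpace ℝ (Fin m)) (b : EuclideanSpace ℝ (Fin m))
    (hb : b ∉ convOf a) (d D : ℝ)
    (hd : IsLeast {r | ∃ x ∈ convOf a, r = ‖b - x‖} d)
    (hD : IsGreatest (Set.range fun i => ‖b - a i‖) D)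
    (ε : ℝ) (hε : ε ∈ Set.Ioo (0 : ℝ) 1) (hεdD : ε < d ^ 2 / D ^ 2)
    (T : EuclideanSpace ℝ (Fin m) →ₗ[ℝ] EuclideanSpace ℝ (Fin k))
    (hT : ∀ x ∈ insert 0 (Set.range fun i => b - a i),
      ∀ y ∈ insert 0 (Set.range fun i => b - a i),
      ((1 - ε) * ‖x - y‖ ^ 2 ≤ ‖T (x - y)‖ ^ 2 ∧ ‖T (x - y)‖ ^ 2 ≤ (1 + ε) * ‖x - y‖ ^ 2) ∧
      ((1 - ε) * ‖x + y‖ ^ 2 ≤ ‖T (x + y)‖ ^ 2 ∧ ‖T (x + y)‖ ^ 2 ≤ (1 + ε) * ‖x + y‖ ^ 2)) :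
    (∀ lam : Fin n → ℝ, (∀ i, 0 ≤ lam i) → ∑ i, lam i = 1 →
        d ^ 2 - ε * D ^ 2 ≤ ‖T b - ∑ i, lam i • T (a i)‖ ^ 2) ∧
      0 < d ^ 2 - ε * D ^ 2 ∧
      T b ∉ convOf (fun i => T (a i)) := by
  obtain ⟨hε0, hε1⟩ := hε
  set v : Fin n → EuclideanSpace ℝ (Fin m) := fun i => b - a i with hv
  -- basic facts about d and D
  obtain ⟨x₀, hx₀C, hdx₀⟩ := hd.1
  have hd0 : 0 ≤ d := hdx₀ ▸ norm_nonneg _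
  have hdpos : 0 < d := by
    rcases hd0.lt_or_eq with h | h
    · exact h
    · exfalso
      apply hb
      have : b - x₀ = 0 := by
        rw [← norm_eq_zero, ← hdx₀, ← h]
      rw [sub_eq_zero] at this
      rwa [this]
  obtain ⟨i₀, hi₀⟩ := hD.1
  have hai₀C : a i₀ ∈ convOf a := by
    refine ⟨fun j => if j = i₀ then 1 else 0, fun j => by positivity, by simp, ?_⟩
    simp [ite_smul]
  have hdD : d ≤ D := by
    have := hd.2 ⟨a i₀, hai₀C, rfl⟩
    simpa [hi₀] using this
  have hDpos : 0 < D := lt_of_lt_of_le hdpos hdD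
  have hεD : ε * D ^ 2 < d ^ 2 := by
    rw [lt_div_iff₀ (by positivity)] at hεdD
    exact hεdD
  have hpos : 0 < d ^ 2 - ε * D ^ 2 := by linarith
  -- the key inner-product estimate
  have hvD : ∀ i, ‖v i‖ ^ 2 ≤ D ^ 2 := by
    intro i
    have h1 : ‖v i‖ ≤ D := hD.2 ⟨i, rfl⟩
    nlinarith [norm_nonneg (v i)]
  have key : ∀ i j, (inner ℝ (v i) (v j) : ℝ) - ε * D ^ 2 ≤ inner ℝ (T (v i)) (T (v j)) := by
    intro i j
    have hvi : v i ∈ insert 0 (Set.range fun i => b - a i) := Set.mem_insert_of_mem _ ⟨i, rfl⟩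
    have hvj : v j ∈ insert 0 (Set.range fun i => b - a i) := Set.mem_insert_of_mem _ ⟨j, rfl⟩
    obtain ⟨⟨_, hsub⟩, ⟨hadd, _⟩⟩ := hT (v i) hvi (v j) hvj
    rw [map_sub] at hsub
    rw [map_add] at hadd
    have ha : ‖v i + v j‖ ^ 2 = ‖v i‖ ^ 2 + 2 * inner ℝ (v i) (v j) + ‖v j‖ ^ 2 :=
      norm_add_sq_real _ _
    have hs : ‖v i - v j‖ ^ 2 = ‖v i‖ ^ 2 - 2 * inner ℝ (v i) (v j) + ‖v j‖ ^ 2 :=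
      norm_sub_sq_real _ _
    have hTa : ‖T (v i) + T (v j)‖ ^ 2
        = ‖T (v i)‖ ^ 2 + 2 * inner ℝ (T (v i)) (T (v j)) + ‖T (v j)‖ ^ 2 :=
      norm_add_sq_real _ _
    have hTs : ‖T (v i) - T (v j)‖ ^ 2
        = ‖T (v i)‖ ^ 2 - 2 * inner ℝ (T (v i)) (T (v j)) + ‖T (v j)‖ ^ 2 :=
      norm_sub_sq_real _ _
    have hiD : ‖v i‖ ^ 2 ≤ D ^ 2 := hvD i
    have hjD : ‖v j‖ ^ 2 ≤ D ^ 2 := hvD j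
    nlinarith [hadd, hsub, ha, hs, hTa, hTs]
  -- main estimate
  have main : ∀ lam : Fin n → ℝ, (∀ i, 0 ≤ lam i) → ∑ i, lam i = 1 →
      d ^ 2 - ε * D ^ 2 ≤ ‖T b - ∑ i, lam i • T (a i)‖ ^ 2 := by
    intro lam hlam hsum
    have hwx : (∑ i, lam i • v i) = b - ∑ i, lam i • a i := by
      simp only [hv, smul_sub, Finset.sum_sub_distrib, ← Finset.sum_smul, hsum, one_smul]
    have hTw : T b - ∑ i, lam i • T (a i) = ∑ i, lam i • T (v i) := by
      simp only [hv, map_sub, smul_sub, Finset.sum_sub_distrib, ← Finset.sum_smul, hsum,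
        one_smul]
    rw [hTw, norm_sq_sum_smul]
    have hlow : ∑ i, ∑ j, lam i * lam j * ((inner ℝ (v i) (v j) : ℝ) - ε * D ^ 2)
        ≤ ∑ i, ∑ j, lam i * lam j * (inner ℝ (T (v i)) (T (v j)) : ℝ) := by
      refine Finset.sum_le_sum fun i _ => Finset.sum_le_sum fun j _ => ?_
      exact mul_le_mul_of_nonneg_left (key i j) (mul_nonneg (hlam i) (hlam j))
    refine le_trans ?_ hlow
    have hexp : ∑ i, ∑ j, lam i * lam j * ((inner ℝ (v i) (v j) : ℝ) - ε * D ^ 2)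
        = ‖∑ i, lam i • v i‖ ^ 2 - ε * D ^ 2 := by
      rw [norm_sq_sum_smul]
      have h1 : ∑ i, ∑ j, lam i * lam j * ((inner ℝ (v i) (v j) : ℝ) - ε * D ^ 2)
          = (∑ i, ∑ j, lam i * lam j * (inner ℝ (v i) (v j) : ℝ))
            - (∑ i, ∑ j, lam i * lam j) * (ε * D ^ 2) := by
        rw [Finset.sum_mul]
        rw [← Finset.sum_sub_distrib]
        refine Finset.sum_congr rfl fun i _ => ?_
        rw [Finset.sum_mul, ← Finset.sum_sub_distrib]
        refine Finset.sum_congr rfl fun j _ => ?_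
        ring
      have h2 : ∑ i, ∑ j, lam i * lam j = 1 := by
        have : ∀ i, ∑ j, lam i * lam j = lam i := by
          intro i; rw [← Finset.mul_sum, hsum, mul_one]
        simp only [this, hsum]
      rw [h1, h2, one_mul]
    rw [hexp]
    have hdw : d ≤ ‖∑ i, lam i • v i‖ := by
      rw [hwx]
      exact hd.2 ⟨∑ i, lam i • a i, ⟨lam, hlam, hsum, rfl⟩, rfl⟩
    have h2 : d ^ 2 ≤ ‖∑ i, lam i • v i‖ ^ 2 := pow_le_pow_left₀ hd0 hdw 2
    exact sub_le_sub_right h2 _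
  refine ⟨main, hpos, ?_⟩
  rintro ⟨lam, hlam, hsum, heq⟩
  have h := main lam hlam hsum
  have hz : T b - ∑ i, lam i • T (a i) = 0 := sub_eq_zero.mpr heq
  rw [hz, norm_zero] at h
  nlinarith
end

section
/- (Separation from a cone, deterministic core) Let b, a_1, …, a_n ∈ ℝ^m be vectors of Euclidean norm 1 with b ∉ C, where C = cone{a_1, …, a_n}. Let d = min_{x ∈ C} ‖b − x‖, let p ∈ C be the nearest point of C to b, and let μ_A = max{‖x‖_A : x ∈ C, ‖x‖ ≤ 1}. Let ε ∈ (0,1) with ε ≤ d²/(μ_A² + 2·‖p‖·μ_A + 1), and let T : ℝ^m → ℝ^k be a linear map such that for all x, y ∈ {b, a_1, …, a_n}, both (1−ε)·‖x−y‖² ≤ ‖T(x−y)‖² ≤ (1+ε)·‖x−y‖² and (1−ε)·‖x+y‖² ≤ ‖T(x+y)‖² ≤ (1+ε)·‖x+y‖² hold. Then ‖T(b) − T(x)‖² > 0 for every x ∈ C; in particular, T(b) ∉ cone{T(a_1), …, T(a_n)}. -/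
/-- The `A`-norm of a point of `cone{a_1, …, a_n}`: the least possible sum of coefficients
over all representations as a non-negative linear combination of the generators. -/
noncomputable def normA {E : Type*} [AddCommMonoid E] [Module ℝ E] {n : ℕ}
    (a : Fin n → E) (x : E) : ℝ :=
  sInf {s | ∃ lam : Fin n → ℝ, (∀ i, 0 ≤ lam i) ∧ x = ∑ i, lam i • a i ∧ s = ∑ i, lam i}

/-!
Polarization turns the distortion bounds into `|⟪T u, T v⟫ - ⟪u, v⟫| ≤ ε` for `u, v ∈ {b, aᵢ}`,
so for `x = ∑ λᵢ aᵢ` we get `‖T b - T x‖² ≥ ‖b - x‖² - ε (1 + ∑ λᵢ)²`. Choosing `λ` with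
`∑ λᵢ ≤ μ_A ‖x‖` and using `⟪b, x⟫ ≤ ‖p‖ ‖x‖` and `‖b - p‖² = 1 - ‖p‖²` (optimality of `p`), the
right side is a quadratic in `‖x‖` whose discriminant is `≤ 0` by the bound on `ε`.

For strictness, the diagonal estimates `‖T u‖² ≥ 1 - ε` are kept exactly. If `T b = T x`, they are
equalities for `b` and for every `aᵢ` with `λᵢ ≠ 0`; on such vectors the lower distortion bounds
alone force `⟪T u, T v⟫ = (1 - ε) ⟪u, v⟫`, whence `0 = ‖T b - T x‖² = (1 - ε) ‖b - x‖² > 0`.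
-/

open Finset RealInnerProductSpace

section Cone

variable {E : Type*} [AddCommGroup E] [Module ℝ E] {n : ℕ} {v : Fin n → E}

lemma zero_mem_coneOf : (0 : E) ∈ coneOf v :=
  ⟨0, fun _ => le_rfl, by simp⟩

lemma add_mem_coneOf {x y : E} (hx : x ∈ coneOf v) (hy : y ∈ coneOf v) :
    x + y ∈ coneOf v := by
  obtain ⟨lam, hlam, rfl⟩ := hx
  obtain ⟨mu, hmu, rfl⟩ := hy
  exact ⟨lam + mu, fun i => add_nonneg (hlam i) (hmu i), by
    simp only [Pi.add_apply, add_smul, sum_add_distrib]⟩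

lemma smul_mem_coneOf {x : E} (hx : x ∈ coneOf v) {t : ℝ} (ht : 0 ≤ t) : t • x ∈ coneOf v := by
  obtain ⟨lam, hlam, rfl⟩ := hx
  exact ⟨t • lam, fun i => mul_nonneg ht (hlam i), by simp [smul_sum, smul_smul]⟩

lemma convex_coneOf : Convex ℝ (coneOf v) := fun _ hx _ hy _ _ hs ht _ =>
  add_mem_coneOf (smul_mem_coneOf hx hs) (smul_mem_coneOf hy ht)

lemma normA_nonneg (x : E) : 0 ≤ normA v x :=
  Real.sInf_nonneg <| by
    rintro s ⟨lam, hlam, -, rfl⟩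
    exact sum_nonneg fun i _ => hlam i

/-- The representations of `x` with coefficient sum at most that of a given one form a compact
set. -/
lemma exists_sum_eq_normA {x : E} (hx : x ∈ coneOf v) :
    ∃ lam : Fin n → ℝ, (∀ i, 0 ≤ lam i) ∧ x = ∑ i, lam i • v i ∧ ∑ i, lam i = normA v x := by
  obtain ⟨lam₀, hlam₀, hx₀⟩ := hx
  set f := Fintype.linearCombination ℝ v
  have hf : ∀ lam, f lam = ∑ i, lam i • v i := Fintype.linearCombination_apply ℝ v
  have hsum : Continuous fun lam : Fin n → ℝ => ∑ i, lam i :=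
    continuous_finsetSum _ fun i _ => continuous_apply i
  have hrepr : IsClosed {lam : Fin n → ℝ | f lam = x} := by
    have : {lam : Fin n → ℝ | f lam = x} = (· - lam₀) ⁻¹' (LinearMap.ker f : Set _) := by
      ext lam
      rw [Set.mem_preimage, SetLike.mem_coe, LinearMap.mem_ker, map_sub, sub_eq_zero, hf lam₀,
        ← hx₀]
      rfl
    rw [this]
    exact (LinearMap.ker f).closed_of_finiteDimensional.preimage (continuous_sub_right lam₀)
  set K := Set.Ici 0 ∩ {lam | f lam = x} ∩ {lam | ∑ i, lam i ≤ ∑ i, lam₀ i}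
  have hK : IsCompact K := by
    refine (isCompact_Icc (a := 0) (b := fun _ => ∑ i, lam₀ i)).of_isClosed_subset
      ((isClosed_Ici.inter hrepr).inter (isClosed_le hsum continuous_const)) ?_
    rintro lam ⟨⟨hlam, -⟩, hle⟩
    exact ⟨hlam, fun i => (single_le_sum (fun j _ => hlam j) (mem_univ i)).trans hle⟩
  have hlam₀K : lam₀ ∈ K := ⟨⟨hlam₀, by simp [hf, hx₀]⟩, le_refl (∑ i, lam₀ i)⟩
  obtain ⟨lam, ⟨⟨hlam, hlamx⟩, -⟩, hmin⟩ := hK.exists_isMinOn ⟨lam₀, hlam₀K⟩ hsum.continuousOn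
  replace hlamx : x = ∑ i, lam i • v i := hlamx.symm.trans (hf lam)
  refine ⟨lam, hlam, hlamx, le_antisymm (le_csInf ⟨_, lam₀, hlam₀, hx₀, rfl⟩ ?_) ?_⟩
  · rintro s ⟨mu, hmu, hmux, rfl⟩
    by_cases hle : ∑ i, mu i ≤ ∑ i, lam₀ i
    · exact hmin ⟨⟨hmu, by simp [hf, hmux]⟩, hle⟩
    · exact (hmin hlam₀K).trans (le_of_not_ge hle)
  · exact csInf_le ⟨0, fun s ⟨mu, hmu, _, hs⟩ => hs ▸ sum_nonneg fun i _ => hmu i⟩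
      ⟨lam, hlam, hlamx, rfl⟩

end Cone

lemma exists_sum_le_mul_norm {E : Type*} [NormedAddCommGroup E] [NormedSpace ℝ E] {n : ℕ}
    {a : Fin n → E} {μA : ℝ}
    (hμ : IsGreatest {t | ∃ x ∈ coneOf a, ‖x‖ ≤ 1 ∧ t = normA a x} μA)
    {x : E} (hx : x ∈ coneOf a) :
    ∃ lam : Fin n → ℝ, (∀ i, 0 ≤ lam i) ∧ x = ∑ i, lam i • a i ∧ ∑ i, lam i ≤ μA * ‖x‖ := by
  rcases eq_or_ne x 0 with rfl | hx0
  · exact ⟨0, fun _ => le_rfl, by simp, by simp⟩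
  have hr : 0 < ‖x‖ := norm_pos_iff.mpr hx0
  obtain ⟨κ, hκ, hyκ, hκsum⟩ := exists_sum_eq_normA (smul_mem_coneOf hx (inv_nonneg.mpr hr.le))
  have hκμ : ∑ i, κ i ≤ μA := hκsum ▸ hμ.2
    ⟨_, smul_mem_coneOf hx (inv_nonneg.mpr hr.le), by simp [norm_smul, hr.ne'], rfl⟩
  refine ⟨fun i => ‖x‖ * κ i, fun i => mul_nonneg hr.le (hκ i), ?_, ?_⟩
  · simp_rw [mul_smul, ← smul_sum, ← hyκ, smul_inv_smul₀ hr.ne']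
  · rw [← mul_sum, mul_comm]
    exact mul_le_mul_of_nonneg_right hκμ hr.le

/-- `1 - 2 P r + r² - ε (1 + μ r)²` is a quadratic in `r` with positive leading coefficient
`1 - ε μ²` and discriminant `4 (P² + ε (μ² + 2 P μ + 1) - 1) ≤ 0`. -/
lemma mul_one_add_mul_sq_le {ε P μ : ℝ} (hε : 0 ≤ ε) (hP : 0 ≤ P) (hμ : 0 ≤ μ)
    (h : ε * (μ ^ 2 + 2 * P * μ + 1) ≤ 1 - P ^ 2) (r : ℝ) :
    ε * (1 + μ * r) ^ 2 ≤ 1 - 2 * P * r + r ^ 2 := by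
  have hlead : 0 < 1 - ε * μ ^ 2 := by nlinarith [mul_nonneg (mul_nonneg hε hP) hμ]
  have hdisc : (1 - ε * μ ^ 2) * (1 - 2 * P * r + r ^ 2 - ε * (1 + μ * r) ^ 2)
      = ((1 - ε * μ ^ 2) * r - (P + ε * μ)) ^ 2 + (1 - P ^ 2 - ε * (μ ^ 2 + 2 * P * μ + 1)) := by
    ring
  nlinarith [sq_nonneg ((1 - ε * μ ^ 2) * r - (P + ε * μ))]

section Nearest

variable {E : Type*} [NormedAddCommGroup E] [InnerProductSpace ℝ E] {n : ℕ} {a : Fin n → E}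
  {b p : E} (hp : p ∈ coneOf a) (hpmin : ∀ x ∈ coneOf a, ‖b - p‖ ≤ ‖b - x‖)
include hp hpmin

lemma inner_sub_sub_le_zero_of_isNearest {z : E} (hz : z ∈ coneOf a) : ⟪b - p, z - p⟫ ≤ 0 := by
  have : Nonempty (coneOf a) := ⟨⟨p, hp⟩⟩
  refine (norm_eq_iInf_iff_real_inner_le_zero convex_coneOf hp).1 ?_ z hz
  exact le_antisymm (le_ciInf fun w => hpmin w w.2)
    (ciInf_le ⟨0, Set.forall_mem_range.2 fun _ => norm_nonneg _⟩ (⟨p, hp⟩ : coneOf a))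

lemma inner_sub_le_zero_of_isNearest {x : E} (hx : x ∈ coneOf a) : ⟪b - p, x⟫ ≤ 0 := by
  simpa using inner_sub_sub_le_zero_of_isNearest hp hpmin (add_mem_coneOf hx hp)

lemma inner_sub_self_eq_zero_of_isNearest : ⟪b - p, p⟫ = 0 := by
  have h0 := inner_sub_sub_le_zero_of_isNearest hp hpmin zero_mem_coneOf
  rw [zero_sub, inner_neg_right, neg_nonpos] at h0
  exact le_antisymm (inner_sub_le_zero_of_isNearest hp hpmin hp) h0

lemma mul_one_add_sq_le_norm_sub_sq (hb : ‖b‖ = 1) {ε μ : ℝ} (hε : 0 ≤ ε) (hμ : 0 ≤ μ)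
    (hεμ : ε * (μ ^ 2 + 2 * ‖p‖ * μ + 1) ≤ ‖b - p‖ ^ 2) {x : E} (hx : x ∈ coneOf a) {σ : ℝ}
    (hσ0 : 0 ≤ σ) (hσ : σ ≤ μ * ‖x‖) :
    ε * (1 + σ) ^ 2 ≤ ‖b - x‖ ^ 2 := by
  have hbp : ⟪b, p⟫ = ‖p‖ ^ 2 := by
    have := inner_sub_self_eq_zero_of_isNearest hp hpmin
    rwa [inner_sub_left, real_inner_self_eq_norm_sq, sub_eq_zero] at this
  have hd : ‖b - p‖ ^ 2 = 1 - ‖p‖ ^ 2 := by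
    rw [norm_sub_sq_real, hb, hbp]; ring
  have hbx : ⟪b, x⟫ ≤ ‖p‖ * ‖x‖ := by
    have := inner_sub_le_zero_of_isNearest hp hpmin hx
    rw [inner_sub_left, sub_nonpos] at this
    exact this.trans (real_inner_le_norm p x)
  calc ε * (1 + σ) ^ 2 ≤ ε * (1 + μ * ‖x‖) ^ 2 := by gcongr
    _ ≤ 1 - 2 * ‖p‖ * ‖x‖ + ‖x‖ ^ 2 :=
      mul_one_add_mul_sq_le hε (norm_nonneg p) hμ (hd ▸ hεμ) ‖x‖
    _ ≤ ‖b - x‖ ^ 2 := by rw [norm_sub_sq_real, hb]; nlinarith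

end Nearest

def AlmostIsometricAt {E F : Type*} [SeminormedAddCommGroup E] [SeminormedAddCommGroup F]
    [Module ℝ E] [Module ℝ F] (T : E →ₗ[ℝ] F) (ε : ℝ) (x : E) : Prop :=
  (1 - ε) * ‖x‖ ^ 2 ≤ ‖T x‖ ^ 2 ∧ ‖T x‖ ^ 2 ≤ (1 + ε) * ‖x‖ ^ 2

section AlmostIsometric

variable {E F : Type*} [NormedAddCommGroup E] [InnerProductSpace ℝ E] [NormedAddCommGroup F]
  [InnerProductSpace ℝ F] {T : E →ₗ[ℝ] F} {ε : ℝ}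

lemma abs_inner_map_sub_inner_le_s16 {u v : E} (hu : ‖u‖ = 1) (hv : ‖v‖ = 1)
    (hsub : AlmostIsometricAt T ε (u - v)) (hadd : AlmostIsometricAt T ε (u + v)) :
    |⟪T u, T v⟫ - ⟪u, v⟫| ≤ ε := by
  obtain ⟨hsub₁, hsub₂⟩ := hsub
  obtain ⟨hadd₁, hadd₂⟩ := hadd
  rw [map_sub, norm_sub_sq_real, norm_sub_sq_real, hu, hv] at hsub₁ hsub₂
  rw [map_add, norm_add_sq_real, norm_add_sq_real, hu, hv] at hadd₁ hadd₂
  rw [abs_sub_le_iff]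
  constructor <;> nlinarith

lemma inner_map_eq_of_norm_map_sq_eq {u v : E} (hu : ‖T u‖ ^ 2 = (1 - ε) * ‖u‖ ^ 2)
    (hv : ‖T v‖ ^ 2 = (1 - ε) * ‖v‖ ^ 2)
    (hsub : (1 - ε) * ‖u - v‖ ^ 2 ≤ ‖T (u - v)‖ ^ 2)
    (hadd : (1 - ε) * ‖u + v‖ ^ 2 ≤ ‖T (u + v)‖ ^ 2) :
    ⟪T u, T v⟫ = (1 - ε) * ⟪u, v⟫ := by
  rw [map_sub, norm_sub_sq_real, norm_sub_sq_real, hu, hv] at hsub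
  rw [map_add, norm_add_sq_real, norm_add_sq_real, hu, hv] at hadd
  linarith

variable {ι : Type*} [Fintype ι]

lemma norm_sum_smul_sq (c : ι → ℝ) (w : ι → E) :
    ‖∑ i, c i • w i‖ ^ 2 = ∑ i, ∑ j, c i * c j * ⟪w i, w j⟫ := by
  rw [← real_inner_self_eq_norm_sq, sum_inner]
  refine sum_congr rfl fun i _ => ?_
  rw [inner_sum]
  refine sum_congr rfl fun j _ => ?_
  rw [real_inner_smul_left, real_inner_smul_right]
  ring

lemma map_sum_smul (c : ι → ℝ) (w : ι → E) :
    T (∑ i, c i • w i) = ∑ i, c i • T (w i) := by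
  simp only [map_sum, map_smul]

lemma norm_sum_smul_sq_sub_le {w : ι → E} (hw : ∀ i, ‖w i‖ = 1)
    (hT : ∀ i j, |⟪T (w i), T (w j)⟫ - ⟪w i, w j⟫| ≤ ε) (c : ι → ℝ) :
    ‖∑ i, c i • w i‖ ^ 2 - ε * (∑ i, |c i|) ^ 2 + ∑ i, c i ^ 2 * (‖T (w i)‖ ^ 2 - (1 - ε))
      ≤ ‖T (∑ i, c i • w i)‖ ^ 2 := by
  classical
  have hterm : ∀ i j, c i * c j * ⟪w i, w j⟫ - ε * (|c i| * |c j|)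
      + (if i = j then c i ^ 2 * (‖T (w i)‖ ^ 2 - (1 - ε)) else 0)
      ≤ c i * c j * ⟪T (w i), T (w j)⟫ := by
    intro i j
    split_ifs with hij
    · subst hij
      rw [real_inner_self_eq_norm_sq, real_inner_self_eq_norm_sq, hw, abs_mul_abs_self]
      exact le_of_eq (by ring)
    · have := neg_abs_le (c i * c j * (⟪T (w i), T (w j)⟫ - ⟪w i, w j⟫))
      rw [abs_mul, abs_mul] at this
      nlinarith [hT i j, mul_nonneg (abs_nonneg (c i)) (abs_nonneg (c j))]
  rw [map_sum_smul, norm_sum_smul_sq, norm_sum_smul_sq, sq, sum_mul_sum, mul_sum]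
  simp_rw [mul_sum]
  calc _ = ∑ i, ∑ j, (c i * c j * ⟪w i, w j⟫ - ε * (|c i| * |c j|)
        + (if i = j then c i ^ 2 * (‖T (w i)‖ ^ 2 - (1 - ε)) else 0)) := by
        simp only [sum_add_distrib, sum_sub_distrib, sum_ite_eq, mem_univ, if_true]
    _ ≤ _ := sum_le_sum fun i _ => sum_le_sum fun j _ => hterm i j

lemma norm_map_sum_smul_sq_eq {w : ι → E}
    (hT : ∀ i j, (1 - ε) * ‖w i - w j‖ ^ 2 ≤ ‖T (w i - w j)‖ ^ 2 ∧
      (1 - ε) * ‖w i + w j‖ ^ 2 ≤ ‖T (w i + w j)‖ ^ 2) {c : ι → ℝ}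
    (hc : ∀ i, c i ≠ 0 → ‖T (w i)‖ ^ 2 = (1 - ε) * ‖w i‖ ^ 2) :
    ‖T (∑ i, c i • w i)‖ ^ 2 = (1 - ε) * ‖∑ i, c i • w i‖ ^ 2 := by
  rw [map_sum_smul, norm_sum_smul_sq, norm_sum_smul_sq, mul_sum]
  refine sum_congr rfl fun i _ => ?_
  rw [mul_sum]
  refine sum_congr rfl fun j _ => ?_
  rcases eq_or_ne (c i) 0 with hi | hi
  · simp [hi]
  rcases eq_or_ne (c j) 0 with hj | hj
  · simp [hj]
  rw [inner_map_eq_of_norm_map_sq_eq (hc i hi) (hc j hj) (hT i j).1 (hT i j).2]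
  ring

lemma map_sum_smul_ne_zero {w : ι → E} (hw : ∀ i, ‖w i‖ = 1)
    (hT : ∀ i j, AlmostIsometricAt T ε (w i - w j) ∧ AlmostIsometricAt T ε (w i + w j))
    (hε : ε < 1) {c : ι → ℝ} (hc : ∑ i, c i • w i ≠ 0)
    (hcε : ε * (∑ i, |c i|) ^ 2 ≤ ‖∑ i, c i • w i‖ ^ 2) :
    T (∑ i, c i • w i) ≠ 0 := by
  intro h0
  have habs : ∀ i j, |⟪T (w i), T (w j)⟫ - ⟪w i, w j⟫| ≤ ε := fun i j =>
    abs_inner_map_sub_inner_le_s16 (hw i) (hw j) (hT i j).1 (hT i j).2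
  have hdefect : ∀ i, 0 ≤ c i ^ 2 * (‖T (w i)‖ ^ 2 - (1 - ε)) := by
    intro i
    have := (abs_le.1 (habs i i)).1
    rw [real_inner_self_eq_norm_sq, real_inner_self_eq_norm_sq, hw] at this
    exact mul_nonneg (sq_nonneg _) (by linarith)
  have hsum : ∑ i, c i ^ 2 * (‖T (w i)‖ ^ 2 - (1 - ε)) = 0 := by
    have := norm_sum_smul_sq_sub_le hw habs c
    rw [h0, norm_zero] at this
    exact le_antisymm (by nlinarith) (sum_nonneg fun i _ => hdefect i)
  have hexact : ∀ i, c i ≠ 0 → ‖T (w i)‖ ^ 2 = (1 - ε) * ‖w i‖ ^ 2 := by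
    intro i hi
    have := (sum_eq_zero_iff_of_nonneg fun i _ => hdefect i).1 hsum i (mem_univ i)
    rw [hw, one_pow, mul_one]
    linarith [(mul_eq_zero.1 this).resolve_left (pow_ne_zero 2 hi)]
  have := norm_map_sum_smul_sq_eq (fun i j => ⟨(hT i j).1.1, (hT i j).2.1⟩) hexact
  rw [h0, norm_zero] at this
  have : 0 < ‖∑ i, c i • w i‖ ^ 2 := by positivity
  nlinarith

lemma map_sub_map_sum_smul_ne_zero {n : ℕ} {b : E} {a : Fin n → E} (hb : ‖b‖ = 1)
    (ha : ∀ i, ‖a i‖ = 1)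
    (hT : ∀ x ∈ insert b (Set.range a), ∀ y ∈ insert b (Set.range a),
      AlmostIsometricAt T ε (x - y) ∧ AlmostIsometricAt T ε (x + y))
    (hε : ε < 1) {lam : Fin n → ℝ} (hlam : ∀ i, 0 ≤ lam i) (hne : b ≠ ∑ i, lam i • a i)
    (hmargin : ε * (1 + ∑ i, lam i) ^ 2 ≤ ‖b - ∑ i, lam i • a i‖ ^ 2) :
    T b - T (∑ i, lam i • a i) ≠ 0 := by
  let w : Option (Fin n) → E := fun o => o.elim b a
  let c : Option (Fin n) → ℝ := fun o => o.elim 1 (-lam ·)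
  have hwc : ∑ o, c o • w o = b - ∑ i, lam i • a i := by
    simp [w, c, Fintype.sum_option, sub_eq_add_neg]
  have hc : ∑ o, |c o| = 1 + ∑ i, lam i := by
    simp [c, Fintype.sum_option, abs_of_nonneg (hlam _)]
  have hw : ∀ o, w o ∈ insert b (Set.range a) := by
    rintro (_ | i)
    exacts [Set.mem_insert b _, Set.mem_insert_of_mem b ⟨i, rfl⟩]
  have hunit : ∀ o, ‖w o‖ = 1 := by
    rintro (_ | i)
    exacts [hb, ha i]
  rw [← map_sub, ← hwc]
  refine map_sum_smul_ne_zero hunit (fun o o' => hT _ (hw o) _ (hw o')) hε ?_ ?_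
  · rwa [hwc, sub_ne_zero]
  · rwa [hc, hwc]

end AlmostIsometric

/-- **Separation from a cone, deterministic core.**
Let `b, a_1, …, a_n` be unit vectors with `b ∉ C = cone{a_1, …, a_n}`, let
`d = min_{x ∈ C} ‖b - x‖`, let `p` be the nearest point of `C` to `b`, and let
`μ_A = max{‖x‖_A : x ∈ C, ‖x‖ ≤ 1}`. Let `ε ∈ (0,1)` with
`ε ≤ d²/(μ_A² + 2·‖p‖·μ_A + 1)`, and let `T` be a linear map which distorts the squared
norms of `x - y` and `x + y` by at most a factor of `1 ± ε` for all
`x, y ∈ {b, a_1, …, a_n}`. Then `‖T b - T x‖² > 0` for every `x ∈ C`; in particular,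
`T b ∉ cone{T (a_1), …, T (a_n)}`. -/
theorem cone_separation_deterministic {m k n : ℕ}
    (b : EuclideanSpace ℝ (Fin m)) (a : Fin n → EuclideanSpace ℝ (Fin m))
    (hb : ‖b‖ = 1) (ha : ∀ i, ‖a i‖ = 1) (hbC : b ∉ coneOf a)
    (p : EuclideanSpace ℝ (Fin m)) (hp : p ∈ coneOf a)
    (hpmin : ∀ x ∈ coneOf a, ‖b - p‖ ≤ ‖b - x‖)
    (d μA : ℝ) (hd : d = ‖b - p‖)
    (hμ : IsGreatest {t | ∃ x ∈ coneOf a, ‖x‖ ≤ 1 ∧ t = normA a x} μA)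
    (ε : ℝ) (hε : ε ∈ Set.Ioo (0 : ℝ) 1)
    (hεd : ε ≤ d ^ 2 / (μA ^ 2 + 2 * ‖p‖ * μA + 1))
    (T : EuclideanSpace ℝ (Fin m) →ₗ[ℝ] EuclideanSpace ℝ (Fin k))
    (hT : ∀ x ∈ insert b (Set.range a), ∀ y ∈ insert b (Set.range a),
      ((1 - ε) * ‖x - y‖ ^ 2 ≤ ‖T (x - y)‖ ^ 2 ∧ ‖T (x - y)‖ ^ 2 ≤ (1 + ε) * ‖x - y‖ ^ 2) ∧
      ((1 - ε) * ‖x + y‖ ^ 2 ≤ ‖T (x + y)‖ ^ 2 ∧ ‖T (x + y)‖ ^ 2 ≤ (1 + ε) * ‖x + y‖ ^ 2)) :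
    (∀ x ∈ coneOf a, 0 < ‖T b - T x‖ ^ 2) ∧
      T b ∉ coneOf (fun i => T (a i)) := by
  obtain ⟨hε0, hε1⟩ := hε
  have hμ0 : 0 ≤ μA := by
    obtain ⟨x, -, -, rfl⟩ := hμ.1
    exact normA_nonneg x
  have hεD : ε * (μA ^ 2 + 2 * ‖p‖ * μA + 1) ≤ ‖b - p‖ ^ 2 := by
    rwa [le_div_iff₀ (by positivity), hd] at hεd
  have hsep : ∀ x ∈ coneOf a, 0 < ‖T b - T x‖ ^ 2 := by
    intro x hx
    obtain ⟨lam, hlam, rfl, hσ⟩ := exists_sum_le_mul_norm hμ hx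
    have hmargin := mul_one_add_sq_le_norm_sub_sq hp hpmin hb hε0.le hμ0 hεD hx
      (sum_nonneg fun i _ => hlam i) hσ
    have hne : b ≠ ∑ i, lam i • a i := fun h => hbC (h ▸ hx)
    exact pow_pos (norm_pos_iff.2 (map_sub_map_sum_smul_ne_zero hb ha hT hε1 hlam hne hmargin)) 2
  refine ⟨hsep, fun ⟨lam, hlam, hTb⟩ => (hsep _ ⟨lam, hlam, rfl⟩).ne' ?_⟩
  rw [map_sum_smul, ← hTb, sub_self, norm_zero, zero_pow two_ne_zero]
end
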